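/- arXiv:1403.2298 — 15 statements merged into one kernel-verified Lean document; each statement's English description precedes it below -/
import Mathlib

section
/- Let K be a field and V a K-vector space with linear endomorphisms δ₁, δ₂ : V → V satisfying δ₁² = 0, δ₂² = 0 and δ₁δ₂ + δ₂δ₁ = 0. Suppose that the cohomologies H_{δ₁} = ker δ₁/im δ₁ and H_{δ₂} = ker δ₂/im δ₂ are finite-dimensional. Then either the Bott-Chern cohomology H_BC or the Aeppli cohomology H_A is infinite-dimensional, or dim H_BC + dim H_A ≥ dim H_{δ₁} + dim H_{δ₂}. -/
open LinearMap Module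

/-- The quotient of a subspace `M` of `V` by (the intersection with `M` of) another
subspace `N` of `V`. -/
abbrev SubQuot {K V : Type*} [Field K] [AddCommGroup V] [Module K V]
    (M N : Submodule K V) : Type _ :=
  M ⧸ (N.comap M.subtype)

namespace FrolicherAux

variable {K V : Type*} [Field K] [AddCommGroup V] [Module K V]

/-- The map on subquotients induced by an inclusion `X' ≤ X`. -/
noncomputable def subQuotIncl {X' X : Submodule K V} (Y : Submodule K V) (h : X' ≤ X) :
    SubQuot X' Y →ₗ[K] SubQuot X Y :=
  Submodule.mapQ _ _ (Submodule.inclusion h) (fun x hx => by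
    simp only [Submodule.mem_comap, Submodule.coe_subtype] at hx ⊢
    simpa using hx)

lemma subQuotIncl_injective {X' X : Submodule K V} (Y : Submodule K V) (h : X' ≤ X) :
    Function.Injective (subQuotIncl Y h) := by
  rw [← LinearMap.ker_eq_bot, eq_bot_iff]
  intro a ha
  obtain ⟨x, rfl⟩ := Submodule.Quotient.mk_surjective _ a
  rw [LinearMap.mem_ker, subQuotIncl, Submodule.mapQ_apply, Submodule.Quotient.mk_eq_zero] at ha
  simp only [Submodule.mem_comap, Submodule.coe_subtype, Submodule.coe_inclusion] at ha
  simpa [Submodule.Quotient.mk_eq_zero, Submodule.mem_comap] using ha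

lemma finOfLe {X X' Y Y' : Submodule K V} (hY : Y ≤ Y') (hX : X' ≤ X)
    [FiniteDimensional K (SubQuot X Y)] :
    FiniteDimensional K (SubQuot X' Y') := by
  haveI : FiniteDimensional K (SubQuot X' Y) :=
    FiniteDimensional.of_injective (subQuotIncl Y hX) (subQuotIncl_injective Y hX)
  have hle : Y.comap X'.subtype ≤ (Y'.comap X'.subtype).comap (LinearMap.id (R := K)) :=
    fun x hx => Submodule.comap_mono hY hx
  have hsurj : Function.Surjective (Submodule.mapQ (Y.comap X'.subtype)
      (Y'.comap X'.subtype) LinearMap.id hle) := by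
    intro a
    obtain ⟨x, rfl⟩ := Submodule.Quotient.mk_surjective _ a
    exact ⟨Submodule.Quotient.mk x, by rw [Submodule.mapQ_apply]; rfl⟩
  exact Module.Finite.of_surjective _ hsurj

lemma subquot_le_left {X' X : Submodule K V} (Y : Submodule K V) (h : X' ≤ X)
    [FiniteDimensional K (SubQuot X Y)] :
    finrank K (SubQuot X' Y) ≤ finrank K (SubQuot X Y) :=
  LinearMap.finrank_le_finrank_of_injective (subQuotIncl_injective Y h)

lemma subquot_add {Y P X : Submodule K V} (hYP : Y ≤ P) (hPX : P ≤ X)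
    [FiniteDimensional K (SubQuot X Y)] :
    finrank K (SubQuot X Y) = finrank K (SubQuot X P) + finrank K (SubQuot P Y) := by
  have hY'P' : Y.comap X.subtype ≤ P.comap X.subtype := Submodule.comap_mono hYP
  set g : P →ₗ[K] X ⧸ Y.comap X.subtype :=
    (Y.comap X.subtype).mkQ ∘ₗ Submodule.inclusion hPX with hg
  have hker : LinearMap.ker g = Y.comap P.subtype := by
    ext x
    simp [hg, Submodule.Quotient.mk_eq_zero, Submodule.mem_comap]
  have hrange : LinearMap.range g = (P.comap X.subtype).map (Y.comap X.subtype).mkQ := by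
    rw [hg, LinearMap.range_comp, Submodule.range_inclusion]
  have e2 : finrank K (SubQuot P Y)
      = finrank K ((P.comap X.subtype).map (Y.comap X.subtype).mkQ) := by
    refine Eq.trans ?_ ((congrArg (fun S : Submodule K (X ⧸ Y.comap X.subtype) =>
      finrank K S) hrange).symm ▸ g.quotKerEquivRange.finrank_eq)
    exact (congrArg (fun A : Submodule K P => finrank K (P ⧸ A)) hker).symm
  have e1 : finrank K ((X ⧸ Y.comap X.subtype) ⧸
        ((P.comap X.subtype).map (Y.comap X.subtype).mkQ)) = finrank K (SubQuot X P) :=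
    (Submodule.quotientQuotientEquivQuotient _ _ hY'P').finrank_eq
  have e3 : finrank K (SubQuot X P) + finrank K (SubQuot P Y) = finrank K (SubQuot X Y) := by
    rw [e2, ← e1]
    exact Submodule.finrank_quotient_add_finrank _
  omega

lemma subquot_le_right {X Y Y' : Submodule K V} (hYY' : Y ≤ Y') (hY'X : Y' ≤ X)
    [FiniteDimensional K (SubQuot X Y)] :
    finrank K (SubQuot X Y') ≤ finrank K (SubQuot X Y) := by
  rw [subquot_add hYY' hY'X]; omega

lemma subquot_secondIso (p p' : Submodule K V) :
    finrank K (SubQuot p (p ⊓ p')) = finrank K (SubQuot (p ⊔ p') p') :=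
  (LinearMap.quotientInfEquivSupQuotient p p').finrank_eq

lemma subquot_map (f : V →ₗ[K] V) {X Y Z' : Submodule K V}
    (hY : Y.comap X.subtype = (Z'.comap f).comap X.subtype) :
    finrank K (SubQuot X Y) = finrank K (SubQuot (X.map f) Z') := by
  set g : X →ₗ[K] (X.map f) ⧸ Z'.comap (X.map f).subtype :=
    (Z'.comap (X.map f).subtype).mkQ ∘ₗ
      (f ∘ₗ X.subtype).codRestrict (X.map f)
        (fun x => Submodule.mem_map_of_mem x.2) with hg
  have hsurj : Function.Surjective g := by
    intro a
    obtain ⟨⟨y, hy⟩, rfl⟩ := Submodule.Quotient.mk_surjective _ a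
    obtain ⟨x, hx, rfl⟩ := hy
    exact ⟨⟨x, hx⟩, rfl⟩
  have hker : LinearMap.ker g = Y.comap X.subtype := by
    rw [hY]
    ext x
    simp [hg, Submodule.Quotient.mk_eq_zero, Submodule.mem_comap]
  have h' : finrank K (SubQuot X Y) = finrank K (X ⧸ LinearMap.ker g) :=
    congrArg (fun A : Submodule K X => finrank K (X ⧸ A)) hker.symm
  exact h'.trans (g.quotKerEquivOfSurjective hsurj).finrank_eq

end FrolicherAux
theorem frolicher_inequality_abstract
    {K V : Type*} [Field K] [AddCommGroup V] [Module K V]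
    (δ₁ δ₂ : V →ₗ[K] V)
    (h1 : δ₁ ∘ₗ δ₁ = 0) (h2 : δ₂ ∘ₗ δ₂ = 0)
    (h12 : δ₁ ∘ₗ δ₂ + δ₂ ∘ₗ δ₁ = 0)
    (hfin1 : FiniteDimensional K (SubQuot (ker δ₁) (range δ₁)))
    (hfin2 : FiniteDimensional K (SubQuot (ker δ₂) (range δ₂))) :
    ¬ FiniteDimensional K (SubQuot (ker δ₁ ⊓ ker δ₂) (range (δ₁ ∘ₗ δ₂))) ∨
    ¬ FiniteDimensional K (SubQuot (ker (δ₁ ∘ₗ δ₂)) (range δ₁ ⊔ range δ₂)) ∨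
    finrank K (SubQuot (ker δ₁) (range δ₁)) +
      finrank K (SubQuot (ker δ₂) (range δ₂)) ≤
    finrank K (SubQuot (ker δ₁ ⊓ ker δ₂) (range (δ₁ ∘ₗ δ₂))) +
      finrank K (SubQuot (ker (δ₁ ∘ₗ δ₂)) (range δ₁ ⊔ range δ₂)) := by
  by_cases hbc : FiniteDimensional K (SubQuot (ker δ₁ ⊓ ker δ₂) (range (δ₁ ∘ₗ δ₂)))
  case neg => exact Or.inl hbc
  by_cases ha : FiniteDimensional K (SubQuot (ker (δ₁ ∘ₗ δ₂)) (range δ₁ ⊔ range δ₂))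
  case neg => exact Or.inr (Or.inl ha)
  refine Or.inr (Or.inr ?_)
  haveI := hbc
  haveI := ha
  haveI := hfin1
  haveI := hfin2
  open FrolicherAux Submodule in
  -- pointwise identities
  have e1 : ∀ v, δ₁ (δ₁ v) = 0 := fun v => by simpa using LinearMap.congr_fun h1 v
  have e2 : ∀ v, δ₂ (δ₂ v) = 0 := fun v => by simpa using LinearMap.congr_fun h2 v
  have e12 : ∀ v, δ₁ (δ₂ v) = - δ₂ (δ₁ v) := fun v => by
    have h := LinearMap.congr_fun h12 v
    simp only [LinearMap.add_apply, LinearMap.comp_apply, LinearMap.zero_apply] at h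
    exact eq_neg_of_add_eq_zero_left h
  have e21 : ∀ v, δ₂ (δ₁ v) = - δ₁ (δ₂ v) := fun v => by simp [e12 v]
  -- basic inclusions
  have hI1N1 : range δ₁ ≤ ker δ₁ := by
    rintro x ⟨w, rfl⟩; exact LinearMap.mem_ker.mpr (e1 w)
  have hI2N2 : range δ₂ ≤ ker δ₂ := by
    rintro x ⟨w, rfl⟩; exact LinearMap.mem_ker.mpr (e2 w)
  have hZI1 : range (δ₁ ∘ₗ δ₂) ≤ range δ₁ := by
    rintro x ⟨w, rfl⟩; exact ⟨δ₂ w, rfl⟩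
  have hZI2 : range (δ₁ ∘ₗ δ₂) ≤ range δ₂ := by
    rintro x ⟨w, rfl⟩
    refine ⟨-δ₁ w, ?_⟩
    show δ₂ (-δ₁ w) = δ₁ (δ₂ w)
    rw [map_neg, e21, neg_neg]
  have hZM : range (δ₁ ∘ₗ δ₂) ≤ ker δ₁ ⊓ ker δ₂ := by
    rintro x ⟨w, rfl⟩
    refine Submodule.mem_inf.mpr ⟨LinearMap.mem_ker.mpr (e1 (δ₂ w)), LinearMap.mem_ker.mpr ?_⟩
    show δ₂ (δ₁ (δ₂ w)) = 0
    rw [e21, e2, map_zero, neg_zero]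
  have hN1T : ker δ₁ ≤ ker (δ₁ ∘ₗ δ₂) := by
    intro x hx
    refine LinearMap.mem_ker.mpr ?_
    show δ₁ (δ₂ x) = 0
    rw [e12, LinearMap.mem_ker.mp hx, map_zero, neg_zero]
  have hN2T : ker δ₂ ≤ ker (δ₁ ∘ₗ δ₂) := by
    intro x hx
    refine LinearMap.mem_ker.mpr ?_
    show δ₁ (δ₂ x) = 0
    rw [LinearMap.mem_ker.mp hx, map_zero]
  have hI1T : range δ₁ ≤ ker (δ₁ ∘ₗ δ₂) := hI1N1.trans hN1T
  have hI2T : range δ₂ ≤ ker (δ₁ ∘ₗ δ₂) := hI2N2.trans hN2T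
  have hJT : range δ₁ ⊔ range δ₂ ≤ ker (δ₁ ∘ₗ δ₂) := sup_le hI1T hI2T
  have hMT : ker δ₁ ⊓ ker δ₂ ≤ ker (δ₁ ∘ₗ δ₂) := inf_le_left.trans hN1T
  have hAT : ker δ₁ ⊔ range δ₂ ≤ ker (δ₁ ∘ₗ δ₂) := sup_le hN1T hI2T
  have hBT : ker δ₂ ⊔ range δ₁ ≤ ker (δ₁ ∘ₗ δ₂) := sup_le hN2T hI1T
  have hJA : range δ₁ ⊔ range δ₂ ≤ ker δ₁ ⊔ range δ₂ :=
    sup_le (hI1N1.trans le_sup_left) le_sup_right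
  have hJB : range δ₁ ⊔ range δ₂ ≤ ker δ₂ ⊔ range δ₁ :=
    sup_le le_sup_right (hI2N2.trans le_sup_left)
  have hJW : range δ₁ ⊔ range δ₂ ≤ (ker δ₁ ⊔ range δ₂) ⊓ (ker δ₂ ⊔ range δ₁) := le_inf hJA hJB
  have hMW : ker δ₁ ⊓ ker δ₂ ≤ (ker δ₁ ⊔ range δ₂) ⊓ (ker δ₂ ⊔ range δ₁) :=
    le_inf (inf_le_left.trans le_sup_left) (inf_le_right.trans le_sup_left)
  have hWT : (ker δ₁ ⊔ range δ₂) ⊓ (ker δ₂ ⊔ range δ₁) ≤ ker (δ₁ ∘ₗ δ₂) :=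
    inf_le_left.trans hAT
  -- image inclusions
  have hmapd2N1M : (ker δ₁).map δ₂ ≤ ker δ₁ ⊓ ker δ₂ := by
    rintro x ⟨y, hy, rfl⟩
    refine Submodule.mem_inf.mpr ⟨LinearMap.mem_ker.mpr ?_, LinearMap.mem_ker.mpr (e2 y)⟩
    rw [e12, LinearMap.mem_ker.mp hy, map_zero, neg_zero]
  have hmapd1TM : (ker (δ₁ ∘ₗ δ₂)).map δ₁ ≤ ker δ₁ ⊓ ker δ₂ := by
    rintro x ⟨y, hy, rfl⟩
    refine Submodule.mem_inf.mpr ⟨LinearMap.mem_ker.mpr (e1 y), LinearMap.mem_ker.mpr ?_⟩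
    rw [e21, show δ₁ (δ₂ y) = 0 from LinearMap.mem_ker.mp hy, neg_zero]
  have hmapd2TM : (ker (δ₁ ∘ₗ δ₂)).map δ₂ ≤ ker δ₁ ⊓ ker δ₂ := by
    rintro x ⟨y, hy, rfl⟩
    exact Submodule.mem_inf.mpr ⟨LinearMap.mem_ker.mpr (LinearMap.mem_ker.mp hy),
      LinearMap.mem_ker.mpr (e2 y)⟩
  have hmapd2AM : ((ker δ₁ ⊔ range δ₂)).map δ₂ ≤ ker δ₁ ⊓ ker δ₂ :=
    (Submodule.map_mono hAT).trans hmapd2TM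
  have hmapd1N2T : (ker δ₂).map δ₁ ≤ (ker (δ₁ ∘ₗ δ₂)).map δ₁ := Submodule.map_mono hN2T
  have hmapd2N1A : (ker δ₁).map δ₂ ≤ ((ker δ₁ ⊔ range δ₂)).map δ₂ :=
    Submodule.map_mono le_sup_left
  have hZmapd2N1 : range (δ₁ ∘ₗ δ₂) ≤ (ker δ₁).map δ₂ := by
    rintro x ⟨w, rfl⟩
    refine ⟨-δ₁ w, LinearMap.mem_ker.mpr (by rw [map_neg, e1, neg_zero]), ?_⟩
    show δ₂ (-δ₁ w) = δ₁ (δ₂ w)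
    rw [map_neg, e21, neg_neg]
  have hZmapd1N2 : range (δ₁ ∘ₗ δ₂) ≤ (ker δ₂).map δ₁ := by
    rintro x ⟨w, rfl⟩
    exact ⟨δ₂ w, LinearMap.mem_ker.mpr (e2 w), rfl⟩
  have hZmapd1T : range (δ₁ ∘ₗ δ₂) ≤ (ker (δ₁ ∘ₗ δ₂)).map δ₁ := hZmapd1N2.trans hmapd1N2T
  have hZmapd2A : range (δ₁ ∘ₗ δ₂) ≤ ((ker δ₁ ⊔ range δ₂)).map δ₂ := hZmapd2N1.trans hmapd2N1A
  have hZP1 : range (δ₁ ∘ₗ δ₂) ≤ (ker δ₁ ⊓ ker δ₂) ⊓ range δ₁ := le_inf hZM hZI1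
  have hZP2 : range (δ₁ ∘ₗ δ₂) ≤ (ker δ₁ ⊓ ker δ₂) ⊓ range δ₂ := le_inf hZM hZI2
  have hZS : range (δ₁ ∘ₗ δ₂) ≤
      ((ker δ₁ ⊓ ker δ₂) ⊓ range δ₁) ⊔ ((ker δ₁ ⊓ ker δ₂) ⊓ range δ₂) :=
    hZP1.trans le_sup_left
  have hSM : ((ker δ₁ ⊓ ker δ₂) ⊓ range δ₁) ⊔ ((ker δ₁ ⊓ ker δ₂) ⊓ range δ₂) ≤
      ker δ₁ ⊓ ker δ₂ := sup_le inf_le_left inf_le_left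
  have hZQ : range (δ₁ ∘ₗ δ₂) ≤
      ((ker δ₁ ⊓ ker δ₂) ⊓ range δ₁) ⊓ ((ker δ₁ ⊓ ker δ₂) ⊓ range δ₂) := le_inf hZP1 hZP2
  have hMI1N1 : (ker δ₁ ⊓ ker δ₂) ⊔ range δ₁ ≤ ker δ₁ := sup_le inf_le_left hI1N1
  have hMI2N2 : (ker δ₁ ⊓ ker δ₂) ⊔ range δ₂ ≤ ker δ₂ := sup_le inf_le_right hI2N2
  -- key comap identities
  have key1 : (((ker δ₁ ⊓ ker δ₂) ⊔ range δ₁)).comap (ker δ₁).subtype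
      = ((range (δ₁ ∘ₗ δ₂)).comap δ₂).comap (ker δ₁).subtype := by
    ext ⟨x, hx⟩
    simp only [Submodule.mem_comap, Submodule.coe_subtype]
    constructor
    · intro hmem
      obtain ⟨y, hy, z, hz, rfl⟩ := Submodule.mem_sup.mp hmem
      obtain ⟨w, rfl⟩ := hz
      refine ⟨-w, ?_⟩
      show δ₁ (δ₂ (-w)) = δ₂ (y + δ₁ w)
      rw [map_add, LinearMap.mem_ker.mp (Submodule.mem_inf.mp hy).2, zero_add,
        map_neg, map_neg, e21]
    · rintro ⟨w, hw⟩
      have hw' : δ₁ (δ₂ w) = δ₂ x := hw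
      refine Submodule.mem_sup.mpr ⟨x + δ₁ w, ?_, δ₁ (-w), ⟨-w, rfl⟩, by rw [map_neg]; abel⟩
      refine Submodule.mem_inf.mpr ⟨LinearMap.mem_ker.mpr ?_, LinearMap.mem_ker.mpr ?_⟩
      · rw [map_add, LinearMap.mem_ker.mp hx, e1, add_zero]
      · rw [map_add, e21, ← hw', add_neg_cancel]
  have key2 : (((ker δ₁ ⊓ ker δ₂) ⊔ range δ₂)).comap (ker δ₂).subtype
      = ((range (δ₁ ∘ₗ δ₂)).comap δ₁).comap (ker δ₂).subtype := by
    ext ⟨x, hx⟩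
    simp only [Submodule.mem_comap, Submodule.coe_subtype]
    constructor
    · intro hmem
      obtain ⟨y, hy, z, hz, rfl⟩ := Submodule.mem_sup.mp hmem
      obtain ⟨w, rfl⟩ := hz
      refine ⟨w, ?_⟩
      show δ₁ (δ₂ w) = δ₁ (y + δ₂ w)
      rw [map_add, LinearMap.mem_ker.mp (Submodule.mem_inf.mp hy).1, zero_add]
    · rintro ⟨w, hw⟩
      have hw' : δ₁ (δ₂ w) = δ₁ x := hw
      refine Submodule.mem_sup.mpr ⟨x - δ₂ w, ?_, δ₂ w, ⟨w, rfl⟩, by abel⟩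
      refine Submodule.mem_inf.mpr ⟨LinearMap.mem_ker.mpr ?_, LinearMap.mem_ker.mpr ?_⟩
      · rw [map_sub, hw', sub_self]
      · rw [map_sub, LinearMap.mem_ker.mp hx, e2, sub_zero]
  have key3 : ((ker δ₁ ⊔ range δ₂)).comap (ker (δ₁ ∘ₗ δ₂)).subtype
      = ((range (δ₁ ∘ₗ δ₂)).comap δ₁).comap (ker (δ₁ ∘ₗ δ₂)).subtype := by
    ext ⟨x, hx⟩
    simp only [Submodule.mem_comap, Submodule.coe_subtype]
    constructor
    · intro hmem
      obtain ⟨y, hy, z, hz, rfl⟩ := Submodule.mem_sup.mp hmem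
      obtain ⟨w, rfl⟩ := hz
      refine ⟨w, ?_⟩
      show δ₁ (δ₂ w) = δ₁ (y + δ₂ w)
      rw [map_add, LinearMap.mem_ker.mp hy, zero_add]
    · rintro ⟨w, hw⟩
      have hw' : δ₁ (δ₂ w) = δ₁ x := hw
      refine Submodule.mem_sup.mpr ⟨x - δ₂ w, LinearMap.mem_ker.mpr ?_, δ₂ w, ⟨w, rfl⟩, by abel⟩
      rw [map_sub, hw', sub_self]
  have key4 : (((ker δ₁ ⊔ range δ₂) ⊓ (ker δ₂ ⊔ range δ₁))).comap (ker δ₁ ⊔ range δ₂).subtype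
      = ((range (δ₁ ∘ₗ δ₂)).comap δ₂).comap (ker δ₁ ⊔ range δ₂).subtype := by
    ext ⟨x, hx⟩
    simp only [Submodule.mem_comap, Submodule.coe_subtype]
    constructor
    · intro hmem
      obtain ⟨y, hy, z, hz, rfl⟩ := Submodule.mem_sup.mp (Submodule.mem_inf.mp hmem).2
      obtain ⟨w, rfl⟩ := hz
      refine ⟨-w, ?_⟩
      show δ₁ (δ₂ (-w)) = δ₂ (y + δ₁ w)
      rw [map_add, LinearMap.mem_ker.mp hy, zero_add, map_neg, map_neg, e21]
    · rintro ⟨w, hw⟩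
      have hw' : δ₁ (δ₂ w) = δ₂ x := hw
      refine Submodule.mem_inf.mpr ⟨hx, ?_⟩
      refine Submodule.mem_sup.mpr ⟨x + δ₁ w, LinearMap.mem_ker.mpr ?_, δ₁ (-w),
        ⟨-w, rfl⟩, by rw [map_neg]; abel⟩
      rw [map_add, e21, ← hw', add_neg_cancel]
  have key5 : (((ker δ₁ ⊓ ker δ₂) ⊓ (range δ₁ ⊔ range δ₂))).comap (ker δ₁ ⊓ ker δ₂).subtype
      = ((((ker δ₁ ⊓ ker δ₂) ⊓ range δ₁) ⊔ ((ker δ₁ ⊓ ker δ₂) ⊓ range δ₂))).comap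
          (ker δ₁ ⊓ ker δ₂).subtype := by
    ext ⟨x, hx⟩
    simp only [Submodule.mem_comap, Submodule.coe_subtype]
    constructor
    · intro hmem
      have h1x : δ₁ x = 0 := LinearMap.mem_ker.mp (Submodule.mem_inf.mp hx).1
      have h2x : δ₂ x = 0 := LinearMap.mem_ker.mp (Submodule.mem_inf.mp hx).2
      obtain ⟨a, ha, b, hb, hab⟩ := Submodule.mem_sup.mp (Submodule.mem_inf.mp hmem).2
      obtain ⟨u, rfl⟩ := ha
      obtain ⟨v, rfl⟩ := hb
      have hv : δ₁ (δ₂ v) = 0 := by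
        have h := congrArg δ₁ hab
        rw [map_add, e1, zero_add, h1x] at h
        exact h
      have hu : δ₂ (δ₁ u) = 0 := by
        have h := congrArg δ₂ hab
        rw [map_add, e2, add_zero, h2x] at h
        exact h
      refine Submodule.mem_sup.mpr ⟨δ₁ u, Submodule.mem_inf.mpr
        ⟨Submodule.mem_inf.mpr ⟨LinearMap.mem_ker.mpr (e1 u), LinearMap.mem_ker.mpr hu⟩,
          ⟨u, rfl⟩⟩, δ₂ v, Submodule.mem_inf.mpr
        ⟨Submodule.mem_inf.mpr ⟨LinearMap.mem_ker.mpr hv, LinearMap.mem_ker.mpr (e2 v)⟩,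
          ⟨v, rfl⟩⟩, hab⟩
    · intro hmem
      have hSJ : ((ker δ₁ ⊓ ker δ₂) ⊓ range δ₁) ⊔ ((ker δ₁ ⊓ ker δ₂) ⊓ range δ₂) ≤
          (ker δ₁ ⊓ ker δ₂) ⊓ (range δ₁ ⊔ range δ₂) :=
        sup_le (le_inf inf_le_left (inf_le_right.trans le_sup_left))
          (le_inf inf_le_left (inf_le_right.trans le_sup_right))
      exact hSJ hmem
  -- finiteness instances
  haveI iMP1 : FiniteDimensional K (SubQuot (ker δ₁ ⊓ ker δ₂) ((ker δ₁ ⊓ ker δ₂) ⊓ range δ₁)) :=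
    finOfLe hZP1 le_rfl
  haveI iMP2 : FiniteDimensional K (SubQuot (ker δ₁ ⊓ ker δ₂) ((ker δ₁ ⊓ ker δ₂) ⊓ range δ₂)) :=
    finOfLe hZP2 le_rfl
  haveI iSZ : FiniteDimensional K (SubQuot
      (((ker δ₁ ⊓ ker δ₂) ⊓ range δ₁) ⊔ ((ker δ₁ ⊓ ker δ₂) ⊓ range δ₂)) (range (δ₁ ∘ₗ δ₂))) :=
    finOfLe le_rfl hSM
  haveI iP1Z : FiniteDimensional K (SubQuot ((ker δ₁ ⊓ ker δ₂) ⊓ range δ₁) (range (δ₁ ∘ₗ δ₂))) :=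
    finOfLe le_rfl inf_le_left
  haveI iWJ : FiniteDimensional K (SubQuot ((ker δ₁ ⊔ range δ₂) ⊓ (ker δ₂ ⊔ range δ₁))
      (range δ₁ ⊔ range δ₂)) := finOfLe le_rfl hWT
  haveI iTW : FiniteDimensional K (SubQuot (ker (δ₁ ∘ₗ δ₂))
      ((ker δ₁ ⊔ range δ₂) ⊓ (ker δ₂ ⊔ range δ₁))) := finOfLe hJW le_rfl
  haveI imapd1T : FiniteDimensional K (SubQuot ((ker (δ₁ ∘ₗ δ₂)).map δ₁) (range (δ₁ ∘ₗ δ₂))) :=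
    finOfLe le_rfl hmapd1TM
  haveI imapd2A : FiniteDimensional K (SubQuot ((ker δ₁ ⊔ range δ₂).map δ₂) (range (δ₁ ∘ₗ δ₂))) :=
    finOfLe le_rfl hmapd2AM
  -- dimension chain
  have d1 : finrank K (SubQuot (ker δ₁) (range δ₁))
      = finrank K (SubQuot (ker δ₁) ((ker δ₁ ⊓ ker δ₂) ⊔ range δ₁))
        + finrank K (SubQuot ((ker δ₁ ⊓ ker δ₂) ⊔ range δ₁) (range δ₁)) :=
    subquot_add le_sup_right hMI1N1
  have d2 : finrank K (SubQuot (ker δ₁ ⊓ ker δ₂) ((ker δ₁ ⊓ ker δ₂) ⊓ range δ₁))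
      = finrank K (SubQuot ((ker δ₁ ⊓ ker δ₂) ⊔ range δ₁) (range δ₁)) :=
    subquot_secondIso _ _
  have d3 : finrank K (SubQuot (ker δ₁) ((ker δ₁ ⊓ ker δ₂) ⊔ range δ₁))
      = finrank K (SubQuot ((ker δ₁).map δ₂) (range (δ₁ ∘ₗ δ₂))) :=
    subquot_map δ₂ key1
  have d4 : finrank K (SubQuot (ker δ₂) (range δ₂))
      = finrank K (SubQuot (ker δ₂) ((ker δ₁ ⊓ ker δ₂) ⊔ range δ₂))
        + finrank K (SubQuot ((ker δ₁ ⊓ ker δ₂) ⊔ range δ₂) (range δ₂)) :=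
    subquot_add le_sup_right hMI2N2
  have d5 : finrank K (SubQuot (ker δ₁ ⊓ ker δ₂) ((ker δ₁ ⊓ ker δ₂) ⊓ range δ₂))
      = finrank K (SubQuot ((ker δ₁ ⊓ ker δ₂) ⊔ range δ₂) (range δ₂)) :=
    subquot_secondIso _ _
  have d6 : finrank K (SubQuot (ker δ₂) ((ker δ₁ ⊓ ker δ₂) ⊔ range δ₂))
      = finrank K (SubQuot ((ker δ₂).map δ₁) (range (δ₁ ∘ₗ δ₂))) :=
    subquot_map δ₁ key2
  have d7 : finrank K (SubQuot (ker δ₁ ⊓ ker δ₂) ((ker δ₁ ⊓ ker δ₂) ⊓ range δ₁))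
      = finrank K (SubQuot (ker δ₁ ⊓ ker δ₂)
          (((ker δ₁ ⊓ ker δ₂) ⊓ range δ₁) ⊔ ((ker δ₁ ⊓ ker δ₂) ⊓ range δ₂)))
        + finrank K (SubQuot (((ker δ₁ ⊓ ker δ₂) ⊓ range δ₁) ⊔ ((ker δ₁ ⊓ ker δ₂) ⊓ range δ₂))
          ((ker δ₁ ⊓ ker δ₂) ⊓ range δ₁)) :=
    subquot_add le_sup_left hSM
  have d8 : finrank K (SubQuot (ker δ₁ ⊓ ker δ₂) ((ker δ₁ ⊓ ker δ₂) ⊓ range δ₂))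
      = finrank K (SubQuot (ker δ₁ ⊓ ker δ₂)
          (((ker δ₁ ⊓ ker δ₂) ⊓ range δ₁) ⊔ ((ker δ₁ ⊓ ker δ₂) ⊓ range δ₂)))
        + finrank K (SubQuot (((ker δ₁ ⊓ ker δ₂) ⊓ range δ₁) ⊔ ((ker δ₁ ⊓ ker δ₂) ⊓ range δ₂))
          ((ker δ₁ ⊓ ker δ₂) ⊓ range δ₂)) :=
    subquot_add le_sup_right hSM
  have d9 : finrank K (SubQuot (ker δ₁ ⊓ ker δ₂) (range (δ₁ ∘ₗ δ₂)))
      = finrank K (SubQuot (ker δ₁ ⊓ ker δ₂)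
          (((ker δ₁ ⊓ ker δ₂) ⊓ range δ₁) ⊔ ((ker δ₁ ⊓ ker δ₂) ⊓ range δ₂)))
        + finrank K (SubQuot (((ker δ₁ ⊓ ker δ₂) ⊓ range δ₁) ⊔ ((ker δ₁ ⊓ ker δ₂) ⊓ range δ₂))
          (range (δ₁ ∘ₗ δ₂))) :=
    subquot_add hZS hSM
  have d10 : finrank K (SubQuot
        (((ker δ₁ ⊓ ker δ₂) ⊓ range δ₁) ⊔ ((ker δ₁ ⊓ ker δ₂) ⊓ range δ₂)) (range (δ₁ ∘ₗ δ₂)))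
      = finrank K (SubQuot (((ker δ₁ ⊓ ker δ₂) ⊓ range δ₁) ⊔ ((ker δ₁ ⊓ ker δ₂) ⊓ range δ₂))
          ((ker δ₁ ⊓ ker δ₂) ⊓ range δ₁))
        + finrank K (SubQuot ((ker δ₁ ⊓ ker δ₂) ⊓ range δ₁) (range (δ₁ ∘ₗ δ₂))) :=
    subquot_add hZP1 le_sup_left
  have d11 : finrank K (SubQuot ((ker δ₁ ⊓ ker δ₂) ⊓ range δ₁)
        (((ker δ₁ ⊓ ker δ₂) ⊓ range δ₁) ⊓ ((ker δ₁ ⊓ ker δ₂) ⊓ range δ₂)))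
      ≤ finrank K (SubQuot ((ker δ₁ ⊓ ker δ₂) ⊓ range δ₁) (range (δ₁ ∘ₗ δ₂))) :=
    subquot_le_right hZQ inf_le_left
  have d12 : finrank K (SubQuot ((ker δ₁ ⊓ ker δ₂) ⊓ range δ₁)
        (((ker δ₁ ⊓ ker δ₂) ⊓ range δ₁) ⊓ ((ker δ₁ ⊓ ker δ₂) ⊓ range δ₂)))
      = finrank K (SubQuot (((ker δ₁ ⊓ ker δ₂) ⊓ range δ₁) ⊔ ((ker δ₁ ⊓ ker δ₂) ⊓ range δ₂))
          ((ker δ₁ ⊓ ker δ₂) ⊓ range δ₂)) :=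
    subquot_secondIso _ _
  have d13 : finrank K (SubQuot (ker (δ₁ ∘ₗ δ₂)) (range δ₁ ⊔ range δ₂))
      = finrank K (SubQuot (ker (δ₁ ∘ₗ δ₂)) ((ker δ₁ ⊔ range δ₂) ⊓ (ker δ₂ ⊔ range δ₁)))
        + finrank K (SubQuot ((ker δ₁ ⊔ range δ₂) ⊓ (ker δ₂ ⊔ range δ₁))
            (range δ₁ ⊔ range δ₂)) :=
    subquot_add hJW hWT
  have d14 : finrank K (SubQuot ((ker δ₁ ⊓ ker δ₂) ⊔ (range δ₁ ⊔ range δ₂))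
        (range δ₁ ⊔ range δ₂))
      ≤ finrank K (SubQuot ((ker δ₁ ⊔ range δ₂) ⊓ (ker δ₂ ⊔ range δ₁))
          (range δ₁ ⊔ range δ₂)) :=
    subquot_le_left _ (sup_le hMW hJW)
  have d15 : finrank K (SubQuot (ker δ₁ ⊓ ker δ₂)
        ((ker δ₁ ⊓ ker δ₂) ⊓ (range δ₁ ⊔ range δ₂)))
      = finrank K (SubQuot ((ker δ₁ ⊓ ker δ₂) ⊔ (range δ₁ ⊔ range δ₂))
          (range δ₁ ⊔ range δ₂)) :=
    subquot_secondIso _ _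
  have d16 : finrank K (SubQuot (ker δ₁ ⊓ ker δ₂)
        ((ker δ₁ ⊓ ker δ₂) ⊓ (range δ₁ ⊔ range δ₂)))
      = finrank K (SubQuot (ker δ₁ ⊓ ker δ₂)
          (((ker δ₁ ⊓ ker δ₂) ⊓ range δ₁) ⊔ ((ker δ₁ ⊓ ker δ₂) ⊓ range δ₂))) :=
    congrArg (fun A : Submodule K ↥(ker δ₁ ⊓ ker δ₂) =>
      finrank K (↥(ker δ₁ ⊓ ker δ₂) ⧸ A)) key5
  have d17 : finrank K (SubQuot (ker (δ₁ ∘ₗ δ₂)) ((ker δ₁ ⊔ range δ₂) ⊓ (ker δ₂ ⊔ range δ₁)))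
      = finrank K (SubQuot (ker (δ₁ ∘ₗ δ₂)) (ker δ₁ ⊔ range δ₂))
        + finrank K (SubQuot (ker δ₁ ⊔ range δ₂)
            ((ker δ₁ ⊔ range δ₂) ⊓ (ker δ₂ ⊔ range δ₁))) :=
    subquot_add inf_le_left hAT
  have d18 : finrank K (SubQuot (ker (δ₁ ∘ₗ δ₂)) (ker δ₁ ⊔ range δ₂))
      = finrank K (SubQuot ((ker (δ₁ ∘ₗ δ₂)).map δ₁) (range (δ₁ ∘ₗ δ₂))) :=
    subquot_map δ₁ key3
  have d19 : finrank K (SubQuot ((ker δ₂).map δ₁) (range (δ₁ ∘ₗ δ₂)))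
      ≤ finrank K (SubQuot ((ker (δ₁ ∘ₗ δ₂)).map δ₁) (range (δ₁ ∘ₗ δ₂))) :=
    subquot_le_left _ hmapd1N2T
  have d20 : finrank K (SubQuot (ker δ₁ ⊔ range δ₂)
        ((ker δ₁ ⊔ range δ₂) ⊓ (ker δ₂ ⊔ range δ₁)))
      = finrank K (SubQuot ((ker δ₁ ⊔ range δ₂).map δ₂) (range (δ₁ ∘ₗ δ₂))) :=
    subquot_map δ₂ key4
  have d21 : finrank K (SubQuot ((ker δ₁).map δ₂) (range (δ₁ ∘ₗ δ₂)))
      ≤ finrank K (SubQuot ((ker δ₁ ⊔ range δ₂).map δ₂) (range (δ₁ ∘ₗ δ₂))) :=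
    subquot_le_left _ hmapd2N1A
  omega
end

section
/- Let V be a K-vector space with an internal ℤ-grading V = ⊕_{n∈ℤ} A^n and let δ₁, δ₂ : V → V be homogeneous linear endomorphisms of degrees a₁ and a₂ respectively, with δ₁² = 0, δ₂² = 0 and δ₁δ₂ + δ₂δ₁ = 0. Suppose that for every n ∈ ℤ the degree-n cohomologies H_{δ₁}^n and H_{δ₂}^n are finite-dimensional. Then for every n ∈ ℤ, either H_BC^n or H_A^n is infinite-dimensional, or dim H_BC^n + dim H_A^n ≥ dim H_{δ₁}^n + dim H_{δ₂}^n. -/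
open LinearMap Module

section aux
variable {K V : Type*} [Field K] [AddCommGroup V] [Module K V]

set_option synthInstance.maxHeartbeats 400000 in
lemma proj_comm_aux (A : ℤ → Submodule K V) [DirectSum.Decomposition A]
    (a : ℤ) (δ : V →ₗ[K] V) (hd : ∀ n : ℤ, (A n).map δ ≤ A (n + a)) (n : ℤ) (u : V) :
    ((DirectSum.decompose A (δ u)) n : V) = δ ((DirectSum.decompose A u) (n - a) : V) := by
  induction u using DirectSum.Decomposition.inductionOn A with
  | zero => simp
  | @homogeneous m x =>
      have hx : δ (x : V) ∈ A (m + a) := hd m ⟨x, x.2, rfl⟩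
      by_cases hmn : m + a = n
      · rw [DirectSum.decompose_of_mem_same A (hmn ▸ hx),
          DirectSum.decompose_of_mem_same A (show (x:V) ∈ A (n - a) by
            rw [← hmn]; simp only [add_sub_cancel_right]; exact x.2)]
      · rw [DirectSum.decompose_of_mem_ne A hx hmn,
          DirectSum.decompose_of_mem_ne A x.2 (by omega), map_zero]
  | add u v hu hv =>
      simp only [map_add, DirectSum.decompose_add, DirectSum.add_apply,
        Submodule.coe_add, hu, hv]

end aux

theorem graded_frolicher_inequality_abstract
    {K V : Type*} [Field K] [AddCommGroup V] [Module K V]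
    (A : ℤ → Submodule K V) (hA : DirectSum.IsInternal A)
    (a₁ a₂ : ℤ) (δ₁ δ₂ : V →ₗ[K] V)
    (hd1 : ∀ n : ℤ, (A n).map δ₁ ≤ A (n + a₁))
    (hd2 : ∀ n : ℤ, (A n).map δ₂ ≤ A (n + a₂))
    (h1 : δ₁ ∘ₗ δ₁ = 0) (h2 : δ₂ ∘ₗ δ₂ = 0)
    (h12 : δ₁ ∘ₗ δ₂ + δ₂ ∘ₗ δ₁ = 0)
    (hfin1 : ∀ n : ℤ, FiniteDimensional K (SubQuot (ker δ₁ ⊓ A n) (range δ₁)))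
    (hfin2 : ∀ n : ℤ, FiniteDimensional K (SubQuot (ker δ₂ ⊓ A n) (range δ₂))) :
    ∀ n : ℤ,
      ¬ FiniteDimensional K (SubQuot (ker δ₁ ⊓ ker δ₂ ⊓ A n) (range (δ₁ ∘ₗ δ₂))) ∨
      ¬ FiniteDimensional K (SubQuot (ker (δ₁ ∘ₗ δ₂) ⊓ A n) (range δ₁ ⊔ range δ₂)) ∨
      finrank K (SubQuot (ker δ₁ ⊓ A n) (range δ₁)) +
        finrank K (SubQuot (ker δ₂ ⊓ A n) (range δ₂)) ≤
      finrank K (SubQuot (ker δ₁ ⊓ ker δ₂ ⊓ A n) (range (δ₁ ∘ₗ δ₂))) +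
        finrank K (SubQuot (ker (δ₁ ∘ₗ δ₂) ⊓ A n) (range δ₁ ⊔ range δ₂)) := by
  haveI : DirectSum.Decomposition A := hA.chooseDecomposition
  intro n
  -- pointwise anticommutation
  have h12' : ∀ x : V, δ₁ (δ₂ x) = - δ₂ (δ₁ x) := by
    intro x
    have := LinearMap.congr_fun h12 x
    simp only [LinearMap.add_apply, LinearMap.comp_apply, LinearMap.zero_apply] at this
    exact eq_neg_of_add_eq_zero_left this
  have h1' : ∀ x : V, δ₁ (δ₁ x) = 0 := fun x => by
    have := LinearMap.congr_fun h1 x; simpa using this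
  have h2' : ∀ x : V, δ₂ (δ₂ x) = 0 := fun x => by
    have := LinearMap.congr_fun h2 x; simpa using this
  -- inclusions of subspaces
  have hk1 : ker δ₁ ≤ ker (δ₁ ∘ₗ δ₂) := by
    intro x hx
    have hx' : δ₁ x = 0 := hx
    simp [LinearMap.mem_ker, LinearMap.comp_apply, h12' x, hx']
  have hk2 : ker δ₂ ≤ ker (δ₁ ∘ₗ δ₂) := by
    intro x hx
    have hx' : δ₂ x = 0 := hx
    simp [LinearMap.mem_ker, LinearMap.comp_apply, hx']
  have hM1A : ker δ₁ ⊓ A n ≤ ker (δ₁ ∘ₗ δ₂) ⊓ A n := inf_le_inf_right _ hk1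
  have hM2A : ker δ₂ ⊓ A n ≤ ker (δ₁ ∘ₗ δ₂) ⊓ A n := inf_le_inf_right _ hk2
  have hB1 : ker δ₁ ⊓ ker δ₂ ⊓ A n ≤ ker δ₁ ⊓ A n :=
    inf_le_inf_right _ inf_le_left
  have hB2 : ker δ₁ ⊓ ker δ₂ ⊓ A n ≤ ker δ₂ ⊓ A n :=
    inf_le_inf_right _ inf_le_right
  have hr1 : range (δ₁ ∘ₗ δ₂) ≤ range δ₁ := by
    rintro _ ⟨u, rfl⟩; exact ⟨δ₂ u, rfl⟩
  have hr2 : range (δ₁ ∘ₗ δ₂) ≤ range δ₂ := by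
    rintro _ ⟨u, rfl⟩; exact ⟨-δ₁ u, by simp [LinearMap.comp_apply, h12' u]⟩
  -- abbreviations
  set M₁ : Submodule K V := ker δ₁ ⊓ A n with hM₁def
  set M₂ : Submodule K V := ker δ₂ ⊓ A n with hM₂def
  set MBC : Submodule K V := ker δ₁ ⊓ ker δ₂ ⊓ A n with hMBCdef
  set MA : Submodule K V := ker (δ₁ ∘ₗ δ₂) ⊓ A n with hMAdef
  -- the maps between quotients
  let mkA : MA →ₗ[K] SubQuot MA (range δ₁ ⊔ range δ₂) :=
    ((range δ₁ ⊔ range δ₂).comap MA.subtype).mkQ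
  let f1 : M₁ →ₗ[K] SubQuot MA (range δ₁ ⊔ range δ₂) :=
    mkA ∘ₗ Submodule.inclusion hM1A
  let f2 : M₂ →ₗ[K] SubQuot MA (range δ₁ ⊔ range δ₂) :=
    mkA ∘ₗ Submodule.inclusion hM2A
  have hf1 : (range δ₁).comap M₁.subtype ≤ ker f1 := by
    intro x hx
    have : (x : V) ∈ range δ₁ ⊔ range δ₂ := Submodule.mem_sup_left (Submodule.mem_comap.mp hx)
    simp only [f1, mkA, LinearMap.mem_ker, LinearMap.comp_apply, Submodule.mkQ_apply,
      Submodule.Quotient.mk_eq_zero, Submodule.mem_comap]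
    exact this
  have hf2 : (range δ₂).comap M₂.subtype ≤ ker f2 := by
    intro x hx
    have : (x : V) ∈ range δ₁ ⊔ range δ₂ := Submodule.mem_sup_right (Submodule.mem_comap.mp hx)
    simp only [f2, mkA, LinearMap.mem_ker, LinearMap.comp_apply, Submodule.mkQ_apply,
      Submodule.Quotient.mk_eq_zero, Submodule.mem_comap]
    exact this
  let q1 : SubQuot M₁ (range δ₁) →ₗ[K] SubQuot MA (range δ₁ ⊔ range δ₂) :=
    Submodule.liftQ _ f1 hf1
  let q2 : SubQuot M₂ (range δ₂) →ₗ[K] SubQuot MA (range δ₁ ⊔ range δ₂) :=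
    Submodule.liftQ _ f2 hf2
  let q : (SubQuot M₁ (range δ₁) × SubQuot M₂ (range δ₂)) →ₗ[K]
      SubQuot MA (range δ₁ ⊔ range δ₂) :=
    q1 ∘ₗ LinearMap.fst K _ _ - q2 ∘ₗ LinearMap.snd K _ _
  -- the map from BC cohomology
  let jf : MBC →ₗ[K] SubQuot M₁ (range δ₁) × SubQuot M₂ (range δ₂) :=
    LinearMap.prod
      (((range δ₁).comap M₁.subtype).mkQ ∘ₗ Submodule.inclusion hB1)
      (((range δ₂).comap M₂.subtype).mkQ ∘ₗ Submodule.inclusion hB2)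
  have hjf : (range (δ₁ ∘ₗ δ₂)).comap MBC.subtype ≤ ker jf := by
    intro x hx
    have hxr : (x : V) ∈ range (δ₁ ∘ₗ δ₂) := Submodule.mem_comap.mp hx
    have e1 : (x : V) ∈ range δ₁ := hr1 hxr
    have e2 : (x : V) ∈ range δ₂ := hr2 hxr
    simp only [jf, LinearMap.mem_ker, LinearMap.prod_apply, Function.prod, Prod.mk_eq_zero,
      LinearMap.comp_apply, Submodule.mkQ_apply, Submodule.Quotient.mk_eq_zero,
      Submodule.mem_comap]
    exact ⟨e1, e2⟩
  let J : SubQuot MBC (range (δ₁ ∘ₗ δ₂)) →ₗ[K]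
      SubQuot M₁ (range δ₁) × SubQuot M₂ (range δ₂) :=
    Submodule.liftQ _ jf hjf
  -- exactness: ker q ≤ range J
  have key : ker q ≤ range J := by
    rintro ⟨c1, c2⟩ hc
    obtain ⟨x, rfl⟩ := Submodule.mkQ_surjective _ c1
    obtain ⟨y, rfl⟩ := Submodule.mkQ_surjective _ c2
    have hc' : f1 x = f2 y := by
      have : q1 (Submodule.Quotient.mk x) - q2 (Submodule.Quotient.mk y) = 0 := hc
      simpa only [q1, q2, Submodule.liftQ_apply, sub_eq_zero] using this
    have hxy : (x : V) - (y : V) ∈ range δ₁ ⊔ range δ₂ := by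
      have : mkA (Submodule.inclusion hM1A x - Submodule.inclusion hM2A y) = 0 := by
        simp only [map_sub]
        simpa only [f1, f2, mkA, LinearMap.comp_apply, sub_eq_zero] using hc'
      simpa only [mkA, Submodule.mkQ_apply, Submodule.Quotient.mk_eq_zero,
        Submodule.mem_comap, Submodule.subtype_apply, Submodule.coe_sub, Submodule.coe_inclusion] using this
    obtain ⟨p, hp, r, hr, hpr⟩ := Submodule.mem_sup.mp hxy
    obtain ⟨u, rfl⟩ := hp
    obtain ⟨v, rfl⟩ := hr
    -- project to degree n
    have hxA : (x : V) ∈ A n := x.2.2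
    have hyA : (y : V) ∈ A n := y.2.2
    set u0 : V := ((DirectSum.decompose A u) (n - a₁) : V) with hu0
    set v0 : V := ((DirectSum.decompose A v) (n - a₂) : V) with hv0
    have hdu : ((DirectSum.decompose A (δ₁ u)) n : V) = δ₁ u0 :=
      proj_comm_aux A a₁ δ₁ hd1 n u
    have hdv : ((DirectSum.decompose A (δ₂ v)) n : V) = δ₂ v0 :=
      proj_comm_aux A a₂ δ₂ hd2 n v
    have hu0A : δ₁ u0 ∈ A n := hdu ▸ SetLike.coe_mem _
    have hv0A : δ₂ v0 ∈ A n := hdv ▸ SetLike.coe_mem _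
    have hsum : (x : V) - (y : V) = δ₁ u0 + δ₂ v0 := by
      have hmem : (x : V) - (y : V) ∈ A n := sub_mem hxA hyA
      have e := DirectSum.decompose_of_mem_same A hmem
      rw [show (x : V) - (y : V) = δ₁ u + δ₂ v from hpr.symm] at e ⊢
      rw [← e]
      simp only [DirectSum.decompose_add, DirectSum.add_apply, Submodule.coe_add, hdu, hdv]
    -- the common representative
    set w : V := (x : V) - δ₁ u0 with hw
    have hw2 : w = (y : V) + δ₂ v0 := by
      have hx' : (x : V) = δ₁ u0 + δ₂ v0 + (y : V) := by
        rw [← hsum]; abel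
      rw [hw, hx']; abel
    have hwker1 : δ₁ w = 0 := by
      have hx1 : δ₁ (x : V) = 0 := x.2.1
      simp [hw, map_sub, hx1, h1' u0]
    have hwker2 : δ₂ w = 0 := by
      have hy2 : δ₂ (y : V) = 0 := y.2.1
      simp [hw2, map_add, hy2, h2' v0]
    have hwA : w ∈ A n := sub_mem hxA hu0A
    have hwMBC : w ∈ MBC := ⟨⟨hwker1, hwker2⟩, hwA⟩
    refine ⟨Submodule.Quotient.mk ⟨w, hwMBC⟩, ?_⟩
    have hJ : J (Submodule.Quotient.mk ⟨w, hwMBC⟩) = jf ⟨w, hwMBC⟩ :=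
      Submodule.liftQ_apply _ _ _
    rw [hJ]
    have e1 : (((range δ₁).comap M₁.subtype).mkQ) (Submodule.inclusion hB1 ⟨w, hwMBC⟩)
        = Submodule.Quotient.mk x := by
      rw [Submodule.mkQ_apply, Submodule.Quotient.eq]
      show (Submodule.inclusion hB1 ⟨w, hwMBC⟩ - x : M₁) ∈ (range δ₁).comap M₁.subtype
      have : ((Submodule.inclusion hB1 ⟨w, hwMBC⟩ - x : M₁) : V) = w - x := rfl
      rw [Submodule.mem_comap]
      show ((Submodule.inclusion hB1 ⟨w, hwMBC⟩ - x : M₁) : V) ∈ range δ₁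
      rw [this]
      exact ⟨-u0, by rw [map_neg]; rw [hw]; abel⟩
    have e2 : (((range δ₂).comap M₂.subtype).mkQ) (Submodule.inclusion hB2 ⟨w, hwMBC⟩)
        = Submodule.Quotient.mk y := by
      rw [Submodule.mkQ_apply, Submodule.Quotient.eq]
      rw [Submodule.mem_comap]
      show ((Submodule.inclusion hB2 ⟨w, hwMBC⟩ - y : M₂) : V) ∈ range δ₂
      have : ((Submodule.inclusion hB2 ⟨w, hwMBC⟩ - y : M₂) : V) = w - y := rfl
      rw [this]
      exact ⟨v0, by rw [hw2]; abel⟩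
    show jf ⟨w, hwMBC⟩ = (Submodule.Quotient.mk x, Submodule.Quotient.mk y)
    simp only [jf, LinearMap.prod_apply, Function.prod, LinearMap.comp_apply]
    exact Prod.ext e1 e2
  -- dimension count
  by_cases hBC : FiniteDimensional K (SubQuot MBC (range (δ₁ ∘ₗ δ₂)))
  · by_cases hQA : FiniteDimensional K (SubQuot MA (range δ₁ ⊔ range δ₂))
    · right; right
      haveI := hfin1 n
      haveI := hfin2 n
      have rn := q.finrank_range_add_finrank_ker
      rw [Module.finrank_prod] at rn
      have hker : finrank K (ker q) ≤ finrank K (SubQuot MBC (range (δ₁ ∘ₗ δ₂))) :=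
        le_trans (Submodule.finrank_mono key) J.finrank_range_le
      have hrange : finrank K (range q) ≤ finrank K (SubQuot MA (range δ₁ ⊔ range δ₂)) :=
        (range q).finrank_le
      omega
    · right; left; exact hQA
  · left; exact hBC
end

section
/- Let V be a K-vector space with an internal ℤ²-grading V = ⊕_{(p,q)∈ℤ²} B^{p,q} and let δ₁, δ₂ : V → V be homogeneous linear endomorphisms of bidegrees (a₁,b₁) and (a₂,b₂) respectively, with δ₁² = 0, δ₂² = 0 and δ₁δ₂ + δ₂δ₁ = 0. Suppose that for every (p,q) ∈ ℤ² the cohomologies H_{δ₁}^{p,q} and H_{δ₂}^{p,q} are finite-dimensional. Then for every (p,q) ∈ ℤ², either H_BC^{p,q} or H_A^{p,q} is infinite-dimensional, or dim H_BC^{p,q} + dim H_A^{p,q} ≥ dim H_{δ₁}^{p,q} + dim H_{δ₂}^{p,q}. -/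
open LinearMap Module

section Proj

variable {K V : Type*} [Field K] [AddCommGroup V] [Module K V]
  (B : ℤ × ℤ → Submodule K V) (hB : DirectSum.IsInternal B)

/-- Projection onto the `i`-th graded piece. -/
noncomputable def projMap (i : ℤ × ℤ) : V →ₗ[K] V :=
  (B i).subtype ∘ₗ (DirectSum.component K (ℤ × ℤ) (fun j => ↥(B j)) i) ∘ₗ
    (LinearEquiv.ofBijective (DirectSum.coeLinearMap B) hB).symm.toLinearMap

lemma projMap_of_mem {i : ℤ × ℤ} {x : V} (hx : x ∈ B i) : projMap B hB i x = x := by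
  simp only [projMap, LinearMap.comp_apply, LinearEquiv.coe_coe]
  have : DirectSum.component K (ℤ × ℤ) (fun j => ↥(B j)) i
      ((LinearEquiv.ofBijective (DirectSum.coeLinearMap B) hB).symm x) = ⟨x, hx⟩ := by
    rw [← DirectSum.apply_eq_component]
    exact hB.ofBijective_coeLinearMap_of_mem hx
  rw [this]; rfl

lemma projMap_of_mem_ne {i j : ℤ × ℤ} {x : V} (hx : x ∈ B j) (hij : j ≠ i) :
    projMap B hB i x = 0 := by
  simp only [projMap, LinearMap.comp_apply, LinearEquiv.coe_coe]
  have : DirectSum.component K (ℤ × ℤ) (fun j => ↥(B j)) i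
      ((LinearEquiv.ofBijective (DirectSum.coeLinearMap B) hB).symm x) = 0 := by
    rw [← DirectSum.apply_eq_component]
    exact hB.ofBijective_coeLinearMap_of_mem_ne hij hx
  rw [this, map_zero]

lemma projMap_mem (i : ℤ × ℤ) (x : V) : projMap B hB i x ∈ B i := by
  simp only [projMap, LinearMap.comp_apply]
  exact Submodule.coe_mem _

lemma projMap_comm (δ : V →ₗ[K] V) (a b : ℤ)
    (hd : ∀ p q : ℤ, (B (p, q)).map δ ≤ B (p + a, q + b)) (p q : ℤ) (x : V) :
    projMap B hB (p, q) (δ x) = δ (projMap B hB (p - a, q - b) x) := by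
  have hx : x ∈ ⨆ i, B i := by rw [hB.submodule_iSup_eq_top]; trivial
  refine Submodule.iSup_induction (motive := fun x =>
      projMap B hB (p, q) (δ x) = δ (projMap B hB (p - a, q - b) x)) B hx ?_ ?_ ?_
  · rintro ⟨r, s⟩ y hy
    have hδy : δ y ∈ B (r + a, s + b) := hd r s ⟨y, hy, rfl⟩
    by_cases h : r = p - a ∧ s = q - b
    · obtain ⟨rfl, rfl⟩ : (r, s) = (p - a, q - b) := by
        simp only [Prod.mk.injEq]; omega
      rw [projMap_of_mem B hB hy]
      have he : ((p - a) + a, (q - b) + b) = (p, q) := by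
        simp only [Prod.mk.injEq]; omega
      rw [he] at hδy
      rw [projMap_of_mem B hB hδy]
    · have hne : (r, s) ≠ (p - a, q - b) := by
        simp only [ne_eq, Prod.mk.injEq]; omega
      have hne2 : (r + a, s + b) ≠ (p, q) := by
        simp only [ne_eq, Prod.mk.injEq]; omega
      rw [projMap_of_mem_ne B hB hy hne, projMap_of_mem_ne B hB hδy hne2, map_zero]
  · simp
  · intro y z hy hz
    simp only [map_add, hy, hz]

include hB in
lemma split_sup (δ₁ δ₂ : V →ₗ[K] V) (a₁ b₁ a₂ b₂ : ℤ)
    (hd1 : ∀ p q : ℤ, (B (p, q)).map δ₁ ≤ B (p + a₁, q + b₁))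
    (hd2 : ∀ p q : ℤ, (B (p, q)).map δ₂ ≤ B (p + a₂, q + b₂))
    {p q : ℤ} {x : V} (hx : x ∈ B (p, q)) (hxm : x ∈ range δ₁ ⊔ range δ₂) :
    ∃ u v : V, x = δ₁ u + δ₂ v ∧ δ₁ u ∈ B (p, q) ∧ δ₂ v ∈ B (p, q) := by
  rw [Submodule.mem_sup] at hxm
  obtain ⟨y, ⟨u₀, rfl⟩, z, ⟨v₀, rfl⟩, hs⟩ := hxm
  refine ⟨projMap B hB (p - a₁, q - b₁) u₀, projMap B hB (p - a₂, q - b₂) v₀, ?_, ?_, ?_⟩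
  · have h := congrArg (projMap B hB (p, q)) hs
    rw [map_add, projMap_comm B hB δ₁ a₁ b₁ hd1, projMap_comm B hB δ₂ a₂ b₂ hd2,
      projMap_of_mem B hB hx] at h
    exact h.symm
  · have h := hd1 (p - a₁) (q - b₁) ⟨_, projMap_mem B hB _ u₀, rfl⟩
    have he : (p - a₁ + a₁, q - b₁ + b₁) = (p, q) := by
      simp only [Prod.mk.injEq]; omega
    rwa [he] at h
  · have h := hd2 (p - a₂) (q - b₂) ⟨_, projMap_mem B hB _ v₀, rfl⟩
    have he : (p - a₂ + a₂, q - b₂ + b₂) = (p, q) := by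
      simp only [Prod.mk.injEq]; omega
    rwa [he] at h

end Proj

theorem bigraded_frolicher_inequality_abstract
    {K V : Type*} [Field K] [AddCommGroup V] [Module K V]
    (B : ℤ × ℤ → Submodule K V) (hB : DirectSum.IsInternal B)
    (a₁ b₁ a₂ b₂ : ℤ) (δ₁ δ₂ : V →ₗ[K] V)
    (hd1 : ∀ p q : ℤ, (B (p, q)).map δ₁ ≤ B (p + a₁, q + b₁))
    (hd2 : ∀ p q : ℤ, (B (p, q)).map δ₂ ≤ B (p + a₂, q + b₂))
    (h1 : δ₁ ∘ₗ δ₁ = 0) (h2 : δ₂ ∘ₗ δ₂ = 0)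
    (h12 : δ₁ ∘ₗ δ₂ + δ₂ ∘ₗ δ₁ = 0)
    (hfin1 : ∀ p q : ℤ, FiniteDimensional K (SubQuot (ker δ₁ ⊓ B (p, q)) (range δ₁)))
    (hfin2 : ∀ p q : ℤ, FiniteDimensional K (SubQuot (ker δ₂ ⊓ B (p, q)) (range δ₂))) :
    ∀ p q : ℤ,
      ¬ FiniteDimensional K (SubQuot (ker δ₁ ⊓ ker δ₂ ⊓ B (p, q)) (range (δ₁ ∘ₗ δ₂))) ∨
      ¬ FiniteDimensional K (SubQuot (ker (δ₁ ∘ₗ δ₂) ⊓ B (p, q)) (range δ₁ ⊔ range δ₂)) ∨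
      finrank K (SubQuot (ker δ₁ ⊓ B (p, q)) (range δ₁)) +
        finrank K (SubQuot (ker δ₂ ⊓ B (p, q)) (range δ₂)) ≤
      finrank K (SubQuot (ker δ₁ ⊓ ker δ₂ ⊓ B (p, q)) (range (δ₁ ∘ₗ δ₂))) +
        finrank K (SubQuot (ker (δ₁ ∘ₗ δ₂) ⊓ B (p, q)) (range δ₁ ⊔ range δ₂)) := by
  intro p q
  by_cases hBC : FiniteDimensional K (SubQuot (ker δ₁ ⊓ ker δ₂ ⊓ B (p, q)) (range (δ₁ ∘ₗ δ₂)))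
  swap
  · exact Or.inl hBC
  by_cases hA : FiniteDimensional K (SubQuot (ker (δ₁ ∘ₗ δ₂) ⊓ B (p, q)) (range δ₁ ⊔ range δ₂))
  swap
  · exact Or.inr (Or.inl hA)
  right; right
  -- pointwise forms of the hypotheses
  have h12' : ∀ x, δ₁ (δ₂ x) = - δ₂ (δ₁ x) := by
    intro x
    have h := LinearMap.congr_fun h12 x
    simp only [LinearMap.add_apply, LinearMap.comp_apply, LinearMap.zero_apply] at h
    exact eq_neg_of_add_eq_zero_left h
  have h1' : ∀ x, δ₁ (δ₁ x) = 0 := fun x => by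
    have h := LinearMap.congr_fun h1 x
    simpa using h
  have h2' : ∀ x, δ₂ (δ₂ x) = 0 := fun x => by
    have h := LinearMap.congr_fun h2 x
    simpa using h
  -- submodules
  set Z₁ : Submodule K V := ker δ₁ ⊓ B (p, q) with hZ1def
  set Z₂ : Submodule K V := ker δ₂ ⊓ B (p, q) with hZ2def
  set ZB : Submodule K V := ker δ₁ ⊓ ker δ₂ ⊓ B (p, q) with hZBdef
  set ZA : Submodule K V := ker (δ₁ ∘ₗ δ₂) ⊓ B (p, q) with hZAdef
  have hZ1A : Z₁ ≤ ZA := by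
    rintro x ⟨hx1, hxB⟩
    replace hx1 : δ₁ x = 0 := hx1
    exact ⟨show δ₁ (δ₂ x) = 0 by rw [h12' x, hx1, map_zero, neg_zero], hxB⟩
  have hZ2A : Z₂ ≤ ZA := by
    rintro x ⟨hx2, hxB⟩
    replace hx2 : δ₂ x = 0 := hx2
    exact ⟨show δ₁ (δ₂ x) = 0 by rw [hx2, map_zero], hxB⟩
  have hZB1 : ZB ≤ Z₁ := fun x hx => ⟨hx.1.1, hx.2⟩
  have hZB2 : ZB ≤ Z₂ := fun x hx => ⟨hx.1.2, hx.2⟩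
  set N₁ : Submodule K Z₁ := (range δ₁).comap Z₁.subtype with hN1def
  set N₂ : Submodule K Z₂ := (range δ₂).comap Z₂.subtype with hN2def
  set NB : Submodule K ZB := (range (δ₁ ∘ₗ δ₂)).comap ZB.subtype with hNBdef
  set NA : Submodule K ZA := ((range δ₁ ⊔ range δ₂)).comap ZA.subtype with hNAdef
  -- the map ψ : H₁ × H₂ → H_A and related maps
  have hψ₁ker : N₁ ≤ ker (NA.mkQ ∘ₗ Submodule.inclusion hZ1A) := by
    intro x hx
    rw [mem_ker, LinearMap.comp_apply, Submodule.mkQ_apply, Submodule.Quotient.mk_eq_zero]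
    exact Submodule.mem_comap.mpr (Submodule.mem_sup_left hx)
  have hψ₂ker : N₂ ≤ ker (NA.mkQ ∘ₗ Submodule.inclusion hZ2A) := by
    intro x hx
    rw [mem_ker, LinearMap.comp_apply, Submodule.mkQ_apply, Submodule.Quotient.mk_eq_zero]
    exact Submodule.mem_comap.mpr (Submodule.mem_sup_right hx)
  set ψ₁ : (Z₁ ⧸ N₁) →ₗ[K] (ZA ⧸ NA) := N₁.liftQ _ hψ₁ker with hψ₁def
  set ψ₂ : (Z₂ ⧸ N₂) →ₗ[K] (ZA ⧸ NA) := N₂.liftQ _ hψ₂ker with hψ₂def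
  set ψ : ((Z₁ ⧸ N₁) × (Z₂ ⧸ N₂)) →ₗ[K] (ZA ⧸ NA) := ψ₁.coprod (-ψ₂) with hψdef
  -- the map φ : H_BC → H₁ × H₂
  have hφ₁ker : NB ≤ ker (N₁.mkQ ∘ₗ Submodule.inclusion hZB1) := by
    rintro x hx
    rw [mem_ker, LinearMap.comp_apply, Submodule.mkQ_apply, Submodule.Quotient.mk_eq_zero]
    obtain ⟨y, hy⟩ := hx
    exact Submodule.mem_comap.mpr ⟨δ₂ y, hy⟩
  have hφ₂ker : NB ≤ ker (N₂.mkQ ∘ₗ Submodule.inclusion hZB2) := by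
    rintro x hx
    rw [mem_ker, LinearMap.comp_apply, Submodule.mkQ_apply, Submodule.Quotient.mk_eq_zero]
    obtain ⟨y, hy⟩ := hx
    refine Submodule.mem_comap.mpr ⟨-δ₁ y, ?_⟩
    calc δ₂ (-δ₁ y) = -δ₂ (δ₁ y) := map_neg δ₂ _
      _ = δ₁ (δ₂ y) := (h12' y).symm
      _ = (x : V) := hy
  set φ : (ZB ⧸ NB) →ₗ[K] ((Z₁ ⧸ N₁) × (Z₂ ⧸ N₂)) :=
    (NB.liftQ _ hφ₁ker).prod (NB.liftQ _ hφ₂ker) with hφdef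
  -- key: ker ψ ≤ range φ
  have hkey : ker ψ ≤ range φ := by
    rintro ⟨c₁, c₂⟩ hc
    obtain ⟨x, rfl⟩ := Submodule.Quotient.mk_surjective N₁ c₁
    obtain ⟨y, rfl⟩ := Submodule.Quotient.mk_surjective N₂ c₂
    rw [mem_ker] at hc
    have hc' : (NA.mkQ) (Submodule.inclusion hZ1A x) = (NA.mkQ) (Submodule.inclusion hZ2A y) := by
      have h0 : ψ₁ (Submodule.Quotient.mk x) + -(ψ₂ (Submodule.Quotient.mk y)) = 0 := by
        simpa [hψdef, LinearMap.coprod_apply] using hc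
      rw [← sub_eq_add_neg, sub_eq_zero] at h0
      simpa [hψ₁def, hψ₂def, Submodule.liftQ_apply, LinearMap.comp_apply] using h0
    rw [Submodule.mkQ_apply, Submodule.mkQ_apply, Submodule.Quotient.eq] at hc'
    have hmem : ((x : V) - (y : V)) ∈ range δ₁ ⊔ range δ₂ := hc'
    have hxyB : ((x : V) - (y : V)) ∈ B (p, q) := sub_mem x.2.2 y.2.2
    obtain ⟨u, v, huv, hu, hv⟩ := split_sup B hB δ₁ δ₂ a₁ b₁ a₂ b₂ hd1 hd2 hxyB hmem
    set w : V := (x : V) - δ₁ u with hwdef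
    have hw1 : δ₁ w = 0 := by
      rw [hwdef, map_sub, h1' u, sub_zero]
      exact x.2.1
    have hweq : w = (y : V) + δ₂ v := by
      have h' : (x : V) = δ₁ u + δ₂ v + (y : V) := by
        rw [← huv]; abel
      rw [hwdef, h']; abel
    have hw2 : δ₂ w = 0 := by
      rw [hweq, map_add, h2' v, add_zero]
      exact y.2.1
    have hwB : w ∈ B (p, q) := sub_mem x.2.2 hu
    have hwZB : w ∈ ZB := ⟨⟨hw1, hw2⟩, hwB⟩
    refine ⟨Submodule.Quotient.mk ⟨w, hwZB⟩, ?_⟩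
    have e1 : (NB.liftQ _ hφ₁ker) (Submodule.Quotient.mk ⟨w, hwZB⟩) = Submodule.Quotient.mk x := by
      rw [Submodule.liftQ_apply, LinearMap.comp_apply, Submodule.mkQ_apply, Submodule.Quotient.eq]
      refine Submodule.mem_comap.mpr ⟨-u, ?_⟩
      rw [map_neg]
      show -δ₁ u = ((Submodule.inclusion hZB1 ⟨w, hwZB⟩ : Z₁) : V) - (x : V)
      simp [Submodule.coe_inclusion, hwdef]
    have e2 : (NB.liftQ _ hφ₂ker) (Submodule.Quotient.mk ⟨w, hwZB⟩) = Submodule.Quotient.mk y := by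
      rw [Submodule.liftQ_apply, LinearMap.comp_apply, Submodule.mkQ_apply, Submodule.Quotient.eq]
      refine Submodule.mem_comap.mpr ⟨v, ?_⟩
      show δ₂ v = ((Submodule.inclusion hZB2 ⟨w, hwZB⟩ : Z₂) : V) - (y : V)
      simp [Submodule.coe_inclusion, hweq]
    rw [hφdef]
    show ((NB.liftQ _ hφ₁ker) (Submodule.Quotient.mk ⟨w, hwZB⟩),
      (NB.liftQ _ hφ₂ker) (Submodule.Quotient.mk ⟨w, hwZB⟩)) = _
    rw [e1, e2]
  -- finiteness instances
  haveI f1 : FiniteDimensional K (Z₁ ⧸ N₁) := hfin1 p q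
  haveI f2 : FiniteDimensional K (Z₂ ⧸ N₂) := hfin2 p q
  haveI fBC : FiniteDimensional K (ZB ⧸ NB) := hBC
  haveI fA : FiniteDimensional K (ZA ⧸ NA) := hA
  -- dimension count
  have hk1 : finrank K (ker ψ) ≤ finrank K (range φ) := Submodule.finrank_mono hkey
  have hk2 : finrank K (range φ) ≤ finrank K (ZB ⧸ NB) := finrank_range_le φ
  have hk3 : finrank K (range ψ) ≤ finrank K (ZA ⧸ NA) := Submodule.finrank_le _
  have hrn : finrank K (range ψ) + finrank K (ker ψ) = finrank K ((Z₁ ⧸ N₁) × (Z₂ ⧸ N₂)) :=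
    finrank_range_add_finrank_ker ψ
  have hpr : finrank K ((Z₁ ⧸ N₁) × (Z₂ ⧸ N₂)) = finrank K (Z₁ ⧸ N₁) + finrank K (Z₂ ⧸ N₂) :=
    Module.finrank_prod
  have r1 : finrank K (SubQuot Z₁ (range δ₁)) = finrank K (Z₁ ⧸ N₁) := rfl
  have r2 : finrank K (SubQuot Z₂ (range δ₂)) = finrank K (Z₂ ⧸ N₂) := rfl
  have r3 : finrank K (SubQuot ZB (range (δ₁ ∘ₗ δ₂))) = finrank K (ZB ⧸ NB) := rfl
  have r4 : finrank K (SubQuot ZA (range δ₁ ⊔ range δ₂)) = finrank K (ZA ⧸ NA) := rfl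
  rw [r1, r2, r3, r4]
  omega
end

section
/- Let V be a K-vector space with a bounded internal ℤ²-grading V = ⊕_{(p,q)} B^{p,q} and δ₁, δ₂ : V → V of bidegrees (1,0) and (0,1) respectively, with δ₁² = 0, δ₂² = 0 and δ₁δ₂ + δ₂δ₁ = 0. Suppose that every H_{δ₁}^{p,q} and every H_{δ₂}^{p,q} is finite-dimensional. Then for every k ∈ ℤ, the total cohomology H_d^k of δ₁+δ₂ is finite-dimensional and dim H_d^k ≤ min( Σ_{p+q=k} dim H_{δ₁}^{p,q}, Σ_{p+q=k} dim H_{δ₂}^{p,q} ) (Frölicher inequality). -/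
open LinearMap Module

/-- The total-degree-`k` piece `⊕_{p+q=k} B^{p,q}` of a `ℤ²`-graded vector space. -/
abbrev TotalPiece {K V : Type*} [Field K] [AddCommGroup V] [Module K V]
    (B : ℤ × ℤ → Submodule K V) (k : ℤ) : Submodule K V :=
  ⨆ p : ℤ, B (p, k - p)

section Helpers

variable {K V : Type*} [Field K] [AddCommGroup V] [Module K V]

noncomputable def subQuotEquivMap (X Y N : Submodule K V) :
    SubQuot X (Y ⊔ N) ≃ₗ[K] SubQuot (X.map N.mkQ) (Y.map N.mkQ) := by
  let f0 : X →ₗ[K] (X.map N.mkQ) :=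
    (N.mkQ ∘ₗ X.subtype).codRestrict _ (fun x => Submodule.mem_map_of_mem x.2)
  let f : X →ₗ[K] SubQuot (X.map N.mkQ) (Y.map N.mkQ) :=
    (((Y.map N.mkQ)).comap (X.map N.mkQ).subtype).mkQ ∘ₗ f0
  have hker : ker f = (Y ⊔ N).comap X.subtype := by
    ext x
    simp only [f, f0, LinearMap.mem_ker, LinearMap.comp_apply, Submodule.mkQ_apply,
      Submodule.Quotient.mk_eq_zero, Submodule.mem_comap, Submodule.mem_map,
      LinearMap.codRestrict_apply, Submodule.subtype_apply]
    constructor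
    · rintro h
      obtain ⟨y, hy, hyx⟩ := h
      have : (x : V) - y ∈ N := by
        rw [← Submodule.Quotient.eq N]
        exact hyx.symm
      have hxe : (x : V) = y + ((x : V) - y) := by abel
      rw [hxe]
      exact Submodule.add_mem_sup hy ‹(x : V) - y ∈ N›
    · intro hx
      rw [Submodule.mem_sup] at hx
      obtain ⟨y, hy, n, hn, hyn⟩ := hx
      refine ⟨y, hy, ?_⟩
      show N.mkQ y = N.mkQ (x : V)
      rw [← hyn, map_add, show N.mkQ n = 0 from (Submodule.Quotient.mk_eq_zero N).2 hn, add_zero]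
  have hsurj : Function.Surjective f := by
    intro z
    obtain ⟨w, rfl⟩ := Submodule.mkQ_surjective _ z
    obtain ⟨v, hv⟩ := w
    obtain ⟨x, hx, rfl⟩ := Submodule.mem_map.mp hv
    exact ⟨⟨x, hx⟩, rfl⟩
  exact (Submodule.quotEquivOfEq _ _ hker.symm).trans (f.quotKerEquivOfSurjective hsurj)

theorem step_findim {Q : Type*} [AddCommGroup Q] [Module K Q] (X Y : Submodule K Q)
    (hYX : Y ≤ X) (hY : FiniteDimensional K Y) (hXY : FiniteDimensional K (SubQuot X Y)) :
    FiniteDimensional K X ∧ finrank K X = finrank K Y + finrank K (SubQuot X Y) := by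
  have e : (Y.comap X.subtype) ≃ₗ[K] Y := Submodule.comapSubtypeEquivOfLe hYX
  haveI : FiniteDimensional K (Y.comap X.subtype) := e.symm.finiteDimensional
  haveI : FiniteDimensional K (X ⧸ (Y.comap X.subtype)) := hXY
  have hrk : Module.rank K (X ⧸ (Y.comap X.subtype)) + Module.rank K (Y.comap X.subtype) =
      Module.rank K X := rank_quotient_add_rank_of_divisionRing _
  haveI hfinX : FiniteDimensional K X := Module.rank_lt_aleph0_iff.mp (by
    rw [← hrk]
    exact Cardinal.add_lt_aleph0 (rank_lt_aleph0 K _) (rank_lt_aleph0 K _))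
  refine ⟨hfinX, ?_⟩
  have h1 := Submodule.finrank_quotient_add_finrank (Y.comap X.subtype)
  have heq : finrank K (Y.comap X.subtype) = finrank K Y := e.finrank_eq
  have h2 : finrank K (X ⧸ Y.comap X.subtype) = finrank K (SubQuot X Y) := rfl
  rw [h2] at h1
  omega

theorem chain_findim {Q : Type*} [AddCommGroup Q] [Module K Q] (D : ℕ → Submodule K Q)
    (hmono : ∀ n, D n ≤ D (n + 1)) (h0 : D 0 = ⊥)
    (hfin : ∀ n, FiniteDimensional K (SubQuot (D (n + 1)) (D n))) (n : ℕ) :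
    FiniteDimensional K (D n) ∧
      finrank K (D n) = ∑ j ∈ Finset.range n, finrank K (SubQuot (D (j + 1)) (D j)) := by
  induction n with
  | zero =>
    constructor
    · rw [h0]; infer_instance
    · rw [h0]
      simp [finrank_bot]
  | succ n ih =>
    obtain ⟨ihfin, ihrank⟩ := ih
    obtain ⟨hfin', hrank'⟩ := step_findim (D (n + 1)) (D n) (hmono n) ihfin (hfin n)
    refine ⟨hfin', ?_⟩
    rw [hrank', ihrank, Finset.sum_range_succ, add_comm]

end Helpers

set_option maxHeartbeats 1000000 in
set_option synthInstance.maxHeartbeats 100000 in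
theorem aux_bound {K V : Type*} [Field K] [AddCommGroup V] [Module K V]
    (B : ℤ × ℤ → Submodule K V) (hB : DirectSum.IsInternal B)
    (hbounded : {pq : ℤ × ℤ | B pq ≠ ⊥}.Finite)
    (δ₁ δ₂ : V →ₗ[K] V)
    (hd1 : ∀ p q : ℤ, (B (p, q)).map δ₁ ≤ B (p + 1, q))
    (hd2 : ∀ p q : ℤ, (B (p, q)).map δ₂ ≤ B (p, q + 1))
    (hdd : ∀ x : V, (δ₁ + δ₂) ((δ₁ + δ₂) x) = 0)
    (hfin2 : ∀ p q : ℤ, FiniteDimensional K (SubQuot (ker δ₂ ⊓ B (p, q)) (range δ₂)))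
    (k : ℤ) :
    FiniteDimensional K (SubQuot (ker (δ₁ + δ₂) ⊓ TotalPiece B k) (range (δ₁ + δ₂))) ∧
      finrank K (SubQuot (ker (δ₁ + δ₂) ⊓ TotalPiece B k) (range (δ₁ + δ₂))) ≤
        ∑ᶠ p : ℤ, finrank K (SubQuot (ker δ₂ ⊓ B (p, k - p)) (range δ₂)) := by
  classical
  haveI dec : DirectSum.Decomposition B := hB.chooseDecomposition
  -- the projections onto the graded pieces
  let π : ℤ × ℤ → (V →ₗ[K] V) := fun i =>
    (B i).subtype ∘ₗ (DirectSum.component K (ℤ × ℤ) (fun j => ↥(B j)) i) ∘ₗ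
      (DirectSum.decomposeLinearEquiv B).toLinearMap
  have hπ_apply : ∀ i x, π i x = (DirectSum.decompose B x i : V) := fun i x => rfl
  have hπmem : ∀ i x, π i x ∈ B i := fun i x => (DirectSum.decompose B x i).2
  have hπsame : ∀ {i x}, x ∈ B i → π i x = x := fun {i x} h =>
    DirectSum.decompose_of_mem_same B h
  have hπne : ∀ {i j x}, x ∈ B i → i ≠ j → π j x = 0 := fun {i j x} h hij => by
    rw [hπ_apply]
    exact DirectSum.decompose_of_mem_ne B h hij
  have hmemSup : ∀ (S : Set (ℤ × ℤ)) (x : V), (∀ j, π j x ≠ 0 → j ∈ S) →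
      x ∈ ⨆ i ∈ S, B i := by
    intro S x hx
    rw [← DirectSum.sum_support_decompose B x]
    refine Submodule.sum_mem _ fun j hj => ?_
    have hj' : π j x ≠ 0 := by
      simpa [hπ_apply, ZeroMemClass.coe_eq_zero] using DFinsupp.mem_support_iff.mp hj
    exact (le_iSup₂ (f := fun i (_ : i ∈ S) => B i) j (hx j hj'))
      (DirectSum.decompose B x j).2
  have hzeroSup : ∀ (S : Set (ℤ × ℤ)) (x : V), x ∈ (⨆ i ∈ S, B i) →
      ∀ j, j ∉ S → π j x = 0 := by
    intro S x hx j hj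
    rw [iSup_subtype'] at hx
    refine Submodule.iSup_induction _ (motive := fun y => π j y = 0) hx
      (fun i y hy => hπne hy ?_) (map_zero _)
      (fun y z hy hz => by
        show π j (y + z) = 0
        rw [map_add, show π j y = 0 from hy, show π j z = 0 from hz, add_zero])
    rintro rfl
    exact hj i.2
  set d : V →ₗ[K] V := δ₁ + δ₂ with hd_def
  have hdapp : ∀ x : V, d x = δ₁ x + δ₂ x := fun x => rfl
  have hRK : range d ≤ ker d := by
    rintro x ⟨y, rfl⟩
    exact LinearMap.mem_ker.mpr (hdd y)
  -- the filtration
  set Sge : ℤ → Set (ℤ × ℤ) := fun p => {i | i.1 + i.2 = k ∧ p ≤ i.1} with hSge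
  set Sge' : ℤ → Set (ℤ × ℤ) := fun p => {i | i.1 + i.2 = k + 1 ∧ p ≤ i.1} with hSge'
  set MS : Set (ℤ × ℤ) → Submodule K V := fun S => ⨆ i ∈ S, B i with hMS
  set F : ℤ → Submodule K V := fun p => MS (Sge p) with hF
  have hmemSge : ∀ (p : ℤ) (i : ℤ × ℤ), i.1 + i.2 = k → p ≤ i.1 → i ∈ Sge p :=
    fun p i h1 h2 => ⟨h1, h2⟩
  have hmemSge' : ∀ (p : ℤ) (i : ℤ × ℤ), i.1 + i.2 = k + 1 → p ≤ i.1 → i ∈ Sge' p :=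
    fun p i h1 h2 => ⟨h1, h2⟩
  have hBleMS : ∀ (S : Set (ℤ × ℤ)) (i), i ∈ S → B i ≤ MS S := fun S i hi =>
    le_iSup₂ (f := fun i (_ : i ∈ S) => B i) i hi
  have hMSmono : ∀ {S S' : Set (ℤ × ℤ)}, S ⊆ S' → MS S ≤ MS S' := fun {S S'} h =>
    iSup₂_le fun i hi => hBleMS S' i (h hi)
  have hFmono : ∀ p, F (p + 1) ≤ F p := fun p =>
    hMSmono fun i hi => ⟨hi.1, by have := hi.2; omega⟩
  have hT : TotalPiece B k = MS {i | i.1 + i.2 = k} := by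
    apply le_antisymm
    · exact iSup_le fun p => hBleMS _ (p, k - p) (by simp only [Set.mem_setOf_eq]; omega)
    · refine iSup₂_le fun i hi => ?_
      obtain ⟨p', q'⟩ := i
      simp only [Set.mem_setOf_eq] at hi
      have hq : q' = k - p' := by omega
      subst hq
      exact le_iSup (fun p => B (p, k - p)) p'
  have hmapd : ∀ p, (F p).map d ≤ MS (Sge' p) := by
    intro p
    rw [Submodule.map_le_iff_le_comap]
    refine iSup₂_le fun i hi => Submodule.map_le_iff_le_comap.mp ?_
    rintro x ⟨y, hy, rfl⟩
    obtain ⟨hi1, hi2⟩ := hi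
    rw [hdapp]
    refine Submodule.add_mem _ ?_ ?_
    · exact hBleMS _ (i.1 + 1, i.2) (hmemSge' p _ (by omega) (by omega))
        (hd1 i.1 i.2 ⟨y, hy, rfl⟩)
    · exact hBleMS _ (i.1, i.2 + 1) (hmemSge' p _ (by omega) (by omega))
        (hd2 i.1 i.2 ⟨y, hy, rfl⟩)
  have hstrip : ∀ (p : ℤ) (y : V), y ∈ F p → π (p, k - p) y = 0 → y ∈ F (p + 1) := by
    intro p y hy h0
    refine hmemSup _ _ fun j hj => ?_
    have hjS : j ∈ Sge p := by
      by_contra h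
      exact hj (hzeroSup _ _ hy j h)
    obtain ⟨a, b⟩ := j
    obtain ⟨hj1, hj2⟩ := hjS
    simp only at hj1 hj2
    by_cases hap : a = p
    · exfalso
      have hb : b = k - p := by omega
      subst hap
      subst hb
      exact hj h0
    · exact hmemSge (p + 1) (a, b) (by omega) (by omega)
  have hBleF : ∀ p : ℤ, B (p, k - p) ≤ F p :=
    fun p => hBleMS _ (p, k - p) (hmemSge p _ (by omega) (by omega))
  have hcomp : ∀ (p : ℤ) (x : V), x ∈ ker d ⊓ F p → δ₂ (π (p, k - p) x) = 0 := by
    intro p x hx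
    obtain ⟨hxk, hxF⟩ := Submodule.mem_inf.mp hx
    have hx' : π (p, k - p) x ∈ B (p, k - p) := hπmem _ _
    have hr : x - π (p, k - p) x ∈ F (p + 1) := by
      refine hstrip p _ (Submodule.sub_mem _ hxF (hBleF p hx')) ?_
      rw [map_sub, hπsame hx', sub_self]
    have hsum : π (p, k - p) x + (x - π (p, k - p) x) = x := by abel
    have h0 : δ₁ (π (p, k - p) x) + δ₂ (π (p, k - p) x) + d (x - π (p, k - p) x) = 0 := by
      rw [← hdapp, ← map_add, hsum]
      exact LinearMap.mem_ker.mp hxk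
    have h1 : π (p, k - p + 1) (δ₁ (π (p, k - p) x)) = 0 :=
      hπne (hd1 p (k - p) ⟨_, hx', rfl⟩)
        (by intro h; rw [Prod.mk.injEq] at h; omega)
    have h2 : π (p, k - p + 1) (δ₂ (π (p, k - p) x)) = δ₂ (π (p, k - p) x) :=
      hπsame (hd2 p (k - p) ⟨_, hx', rfl⟩)
    have h3 : π (p, k - p + 1) (d (x - π (p, k - p) x)) = 0 := by
      refine hzeroSup (Sge' (p + 1)) _ (hmapd (p + 1) ⟨_, hr, rfl⟩) _ ?_
      intro hmem
      have := hmem.2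
      simp only at this
      omega
    have h4 := congrArg (π (p, k - p + 1)) h0
    rw [map_add, map_add, h1, h2, h3, map_zero, zero_add, add_zero] at h4
    exact h4
  have hπcomm : ∀ (i : ℤ × ℤ) (x : V), π (i.1, i.2 + 1) (δ₂ x) = δ₂ (π i x) := by
    intro i x
    have hx := DirectSum.sum_support_decompose B x
    conv_lhs => rw [← hx]
    conv_rhs => rw [← hx]
    rw [map_sum, map_sum, map_sum, map_sum]
    refine Finset.sum_congr rfl fun j hj => ?_
    have hcj : ((DirectSum.decompose B x j : V)) ∈ B j := (DirectSum.decompose B x j).2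
    by_cases hji : j = i
    · subst hji
      rw [hπsame (hd2 j.1 j.2 ⟨_, hcj, rfl⟩), hπsame hcj]
    · rw [hπne (hd2 j.1 j.2 ⟨_, hcj, rfl⟩)
        (fun h => by rw [Prod.mk.injEq] at h; exact hji (Prod.ext h.1 (by omega))),
        hπne hcj hji, map_zero]

  have key : ∀ p : ℤ,
      FiniteDimensional K (SubQuot (ker d ⊓ F p) ((ker d ⊓ F (p + 1)) ⊔ range d)) ∧
        finrank K (SubQuot (ker d ⊓ F p) ((ker d ⊓ F (p + 1)) ⊔ range d)) ≤
          finrank K (SubQuot (ker δ₂ ⊓ B (p, k - p)) (range δ₂)) := by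
    intro p
    set ip : ℤ × ℤ := (p, k - p) with hip
    set Kp : Submodule K V := ker d ⊓ F p with hKp
    set Zp : Submodule K V := ker δ₂ ⊓ B ip with hZp
    set A : Submodule K V := Kp.map (π ip) with hA
    set Nn : Submodule K V := (range d ⊓ F p).map (π ip) with hNn
    have hAZ : A ≤ Zp := by
      rintro x ⟨y, hy, rfl⟩
      exact Submodule.mem_inf.mpr ⟨LinearMap.mem_ker.mpr (hcomp p y hy), hπmem _ _⟩
    have hgmem : ∀ x : Kp, π ip (x : V) ∈ A := fun x => Submodule.mem_map_of_mem x.2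
    let g0 : Kp →ₗ[K] A := ((π ip) ∘ₗ Kp.subtype).codRestrict A hgmem
    let g : Kp →ₗ[K] SubQuot A Nn := (Nn.comap A.subtype).mkQ ∘ₗ g0
    have hgker : ker g = ((ker d ⊓ F (p + 1)) ⊔ range d).comap Kp.subtype := by
      ext x
      simp only [g, g0, LinearMap.mem_ker, LinearMap.comp_apply, Submodule.mkQ_apply,
        Submodule.Quotient.mk_eq_zero, Submodule.mem_comap, LinearMap.codRestrict_apply,
        Submodule.subtype_apply, hNn, Submodule.mem_map]
      have hx12 := Submodule.mem_inf.mp x.2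
      constructor
      · rintro ⟨w, hw, hww⟩
        obtain ⟨hwr, hwF⟩ := Submodule.mem_inf.mp hw
        have hxw1 : (x : V) - w ∈ ker d := Submodule.sub_mem _ hx12.1 (hRK hwr)
        have hxw2 : (x : V) - w ∈ F p := Submodule.sub_mem _ hx12.2 hwF
        have hxw3 : (x : V) - w ∈ F (p + 1) :=
          hstrip p _ hxw2 (by rw [map_sub, hww]; exact sub_self _)
        have hxe : (x : V) = ((x : V) - w) + w := by abel
        rw [hxe]
        exact Submodule.add_mem_sup (Submodule.mem_inf.mpr ⟨hxw1, hxw3⟩) hwr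
      · intro hx
        rw [Submodule.mem_sup] at hx
        obtain ⟨z, hz, w, hw, hzw⟩ := hx
        obtain ⟨hz1, hz2⟩ := Submodule.mem_inf.mp hz
        have hz0 : π ip z = 0 := by
          refine hzeroSup (Sge (p + 1)) z hz2 ip fun hmem => ?_
          have := hmem.2
          rw [hip] at this
          simp only at this
          omega
        have hwF : w ∈ F p := by
          have hwe : w = (x : V) - z := by rw [← hzw]; abel
          rw [hwe]
          exact Submodule.sub_mem _ hx12.2 (hFmono p hz2)
        exact ⟨w, Submodule.mem_inf.mpr ⟨hw, hwF⟩, by show π ip w = π ip (x : V); rw [← hzw, map_add, hz0, zero_add]⟩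
    have hg0surj : Function.Surjective g0 := by
      rintro ⟨av, ha⟩
      obtain ⟨y, hy, rfl⟩ := Submodule.mem_map.mp ha
      exact ⟨⟨y, hy⟩, rfl⟩
    have hgsurj : Function.Surjective g :=
      (Submodule.mkQ_surjective _).comp hg0surj
    have hIN : range δ₂ ⊓ B ip ≤ Nn := by
      intro av hav
      obtain ⟨har, haB⟩ := Submodule.mem_inf.mp hav
      obtain ⟨u, rfl⟩ := har
      have hcm := hπcomm (p, k - p - 1) u
      have hidx : ((p : ℤ), k - p - 1 + 1) = ip := by rw [hip]; norm_num
      rw [hidx] at hcm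
      rw [hπsame haB] at hcm
      set u' := π (p, k - p - 1) u with hu'
      have hu'mem : u' ∈ B (p, k - p - 1) := hπmem _ _
      have hδ₂u' : δ₂ u' ∈ B ip := by rw [← hcm]; exact haB
      refine Submodule.mem_map.mpr ⟨d u', Submodule.mem_inf.mpr ⟨⟨u', rfl⟩, ?_⟩, ?_⟩
      · rw [hdapp]
        refine Submodule.add_mem _ ?_ ?_
        · exact hBleMS _ (p + 1, k - p - 1) (hmemSge p _ (by omega) (by omega))
            (hd1 p (k - p - 1) ⟨u', hu'mem, rfl⟩)
        · exact hBleF p (by rw [hip] at hδ₂u'; exact hδ₂u')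
      · rw [hdapp, map_add,
          hπne (hd1 p (k - p - 1) ⟨u', hu'mem, rfl⟩)
            (by intro h; rw [hip, Prod.mk.injEq] at h; omega),
          hπsame hδ₂u', zero_add, hcm]
    haveI hZfin : FiniteDimensional K (SubQuot Zp (range δ₂)) := hfin2 p (k - p)
    let j1 : (A ⧸ (range δ₂).comap A.subtype) →ₗ[K] SubQuot Zp (range δ₂) :=
      Submodule.mapQ _ _ (Submodule.inclusion hAZ) (fun x hx => hx)
    have hj1inj : Function.Injective j1 := by
      rw [← LinearMap.ker_eq_bot]
      refine Submodule.ker_liftQ_eq_bot _ _ _ ?_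
      intro x hx
      simp only [LinearMap.mem_ker, LinearMap.comp_apply, Submodule.mkQ_apply,
        Submodule.Quotient.mk_eq_zero, Submodule.mem_comap] at hx ⊢
      exact hx
    haveI hAfin : FiniteDimensional K (A ⧸ (range δ₂).comap A.subtype) :=
      FiniteDimensional.of_injective j1 hj1inj
    have hs1le : (range δ₂).comap A.subtype ≤ Nn.comap A.subtype := by
      intro x hx
      have hxB : (x : V) ∈ B ip := (Submodule.mem_inf.mp (hAZ x.2)).2
      exact hIN (Submodule.mem_inf.mpr ⟨hx, hxB⟩)
    let s1 : (A ⧸ (range δ₂).comap A.subtype) →ₗ[K] SubQuot A Nn :=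
      Submodule.mapQ _ _ LinearMap.id (fun x hx => hs1le hx)
    have hs1surj : Function.Surjective s1 := by
      intro y
      obtain ⟨av, rfl⟩ := Submodule.Quotient.mk_surjective _ y
      exact ⟨Submodule.Quotient.mk av, by simp [s1, Submodule.mapQ_apply]⟩
    haveI : FiniteDimensional K (SubQuot A Nn) := Module.Finite.of_surjective s1 hs1surj
    let gbar : SubQuot Kp ((ker d ⊓ F (p + 1)) ⊔ range d) →ₗ[K] SubQuot A Nn :=
      Submodule.liftQ _ g (le_of_eq hgker.symm)
    have hgbarinj : Function.Injective gbar := by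
      rw [← LinearMap.ker_eq_bot]
      exact Submodule.ker_liftQ_eq_bot _ _ _ (le_of_eq hgker)
    haveI hfinKp : FiniteDimensional K (SubQuot Kp ((ker d ⊓ F (p + 1)) ⊔ range d)) :=
      FiniteDimensional.of_injective gbar hgbarinj
    refine ⟨hfinKp, ?_⟩
    have r1 : finrank K (SubQuot Kp ((ker d ⊓ F (p + 1)) ⊔ range d)) ≤
        finrank K (SubQuot A Nn) :=
      LinearMap.finrank_le_finrank_of_injective hgbarinj
    have r2 : finrank K (SubQuot A Nn) ≤ finrank K (A ⧸ (range δ₂).comap A.subtype) := by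
      have h := LinearMap.finrank_range_le s1
      rwa [LinearMap.range_eq_top.mpr hs1surj, finrank_top] at h
    have r3 : finrank K (A ⧸ (range δ₂).comap A.subtype) ≤
        finrank K (SubQuot Zp (range δ₂)) :=
      LinearMap.finrank_le_finrank_of_injective hj1inj
    exact le_trans r1 (le_trans r2 r3)

  -- bound on the grading
  set Nb : ℕ := hbounded.toFinset.sup (fun i : ℤ × ℤ => i.1.natAbs) with hNbdef
  have hNb : ∀ i : ℤ × ℤ, B i ≠ ⊥ → i.1.natAbs ≤ Nb := fun i hi =>
    Finset.le_sup (f := fun i : ℤ × ℤ => i.1.natAbs) (hbounded.mem_toFinset.mpr hi)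
  set a : ℤ := -(Nb : ℤ) - 1 with ha
  set b : ℤ := (Nb : ℤ) + 1 with hb
  have hFa : F a = MS {i | i.1 + i.2 = k} := by
    apply le_antisymm
    · exact hMSmono fun i hi => hi.1
    · refine iSup₂_le fun i hi => ?_
      by_cases hBi : B i = ⊥
      · rw [hBi]; exact bot_le
      · refine hBleMS _ i (hmemSge a i hi ?_)
        have := hNb i hBi
        omega
  have hFb : F b = ⊥ := by
    rw [eq_bot_iff]
    refine iSup₂_le fun i hi => ?_
    by_cases hBi : B i = ⊥
    · rw [hBi]
    · exfalso
      have h1 := hNb i hBi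
      have h2 := hi.2
      simp only [hb] at h2
      omega
  set C : ℤ → Submodule K (V ⧸ range d) := fun p => (ker d ⊓ F p).map (range d).mkQ with hC
  set D : ℕ → Submodule K (V ⧸ range d) := fun n => C (b - n) with hD
  have hDmono : ∀ n : ℕ, D n ≤ D (n + 1) := by
    intro n
    have h1 : (b - (n + 1 : ℕ) : ℤ) + 1 = b - n := by push_cast; ring
    have h2 : C ((b - (n + 1 : ℕ) : ℤ) + 1) ≤ C (b - (n + 1 : ℕ)) :=
      Submodule.map_mono (inf_le_inf_left _ (hFmono _))
    rw [h1] at h2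
    exact h2
  have hD0 : D 0 = ⊥ := by
    have hb0 : (b - ((0 : ℕ) : ℤ)) = b := by norm_num
    show C (b - ((0 : ℕ) : ℤ)) = ⊥
    rw [hb0]
    show (ker d ⊓ F b).map (range d).mkQ = ⊥
    rw [hFb, inf_bot_eq, Submodule.map_bot]
  have hDfin : ∀ n : ℕ, FiniteDimensional K (SubQuot (D (n + 1)) (D n)) := by
    intro n
    have h1 : (b - (n + 1 : ℕ) : ℤ) + 1 = b - n := by push_cast; ring
    have E2 := subQuotEquivMap (ker d ⊓ F (b - (n + 1 : ℕ)))
      (ker d ⊓ F ((b - (n + 1 : ℕ)) + 1)) (range d)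
    rw [h1] at E2
    have hk := (key (b - (n + 1 : ℕ))).1
    rw [h1] at hk
    haveI := hk
    exact E2.finiteDimensional
  obtain ⟨hfinD, hrankD⟩ := chain_findim D hDmono hD0 hDfin (b - a).toNat
  have hba : ((b - a).toNat : ℤ) = b - a := Int.toNat_of_nonneg (by omega)
  have hDtop : D ((b - a).toNat) = C a := by
    show C (b - ((b - a).toNat : ℤ)) = C a
    rw [hba]
    norm_num
  -- transport to the target
  have hWeq : ker d ⊓ TotalPiece B k = ker d ⊓ F a := by rw [hT, hFa]
  have hbotsup : (⊥ : Submodule K V) ⊔ range d = range d := bot_sup_eq _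
  have e1 : SubQuot (ker d ⊓ F a) (range d) ≃ₗ[K]
      SubQuot (ker d ⊓ F a) ((⊥ : Submodule K V) ⊔ range d) :=
    Submodule.quotEquivOfEq _ _ (by rw [hbotsup])
  have e2 := subQuotEquivMap (ker d ⊓ F a) (⊥ : Submodule K V) (range d)
  have hbotmap : (⊥ : Submodule K V).map (range d).mkQ = ⊥ := Submodule.map_bot _
  have e3 : SubQuot (C a) ((⊥ : Submodule K V).map (range d).mkQ) ≃ₗ[K] C a :=
    (Submodule.quotEquivOfEq _ _ (by rw [hbotmap, Submodule.comap_bot, Submodule.ker_subtype])).trans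
      (Submodule.quotEquivOfEqBot _ rfl)
  have E : SubQuot (ker d ⊓ F a) (range d) ≃ₗ[K] C a := e1.trans (e2.trans e3)
  rw [hDtop] at hfinD hrankD
  constructor
  · rw [hWeq]
    exact E.symm.finiteDimensional
  · rw [hWeq]
    set h2fun : ℤ → ℕ :=
      fun p => finrank K (SubQuot (ker δ₂ ⊓ B (p, k - p)) (range δ₂)) with hh2fun
    have step : ∀ j : ℕ, finrank K (SubQuot (D (j + 1)) (D j)) ≤ h2fun (b - (j + 1 : ℕ)) := by
      intro j
      have h1 : (b - (j + 1 : ℕ) : ℤ) + 1 = b - j := by push_cast; ring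
      have E2 := subQuotEquivMap (ker d ⊓ F (b - (j + 1 : ℕ)))
        (ker d ⊓ F ((b - (j + 1 : ℕ)) + 1)) (range d)
      rw [h1] at E2
      have hk := (key (b - (j + 1 : ℕ))).2
      rw [h1] at hk
      have h5 : finrank K (SubQuot (D (j + 1)) (D j)) =
          finrank K (SubQuot (ker d ⊓ F (b - (j + 1 : ℕ)))
            ((ker d ⊓ F (b - (j : ℕ))) ⊔ range d)) := E2.symm.finrank_eq
      rw [h5]
      exact hk
    have hsum1 : finrank K (C a) ≤ ∑ j ∈ Finset.range (b - a).toNat, h2fun (b - (j + 1 : ℕ)) := by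
      rw [hrankD]
      exact Finset.sum_le_sum fun j _ => step j
    have hsum2 : ∑ j ∈ Finset.range (b - a).toNat, h2fun (b - (j + 1 : ℕ)) =
        ∑ p ∈ Finset.Ico a b, h2fun p := by
      refine Finset.sum_bij' (fun j _ => b - (j + 1 : ℕ)) (fun p _ => (b - 1 - p).toNat)
        ?_ ?_ ?_ ?_ ?_
      · intro j hj
        simp only [Finset.mem_range] at hj
        simp only [Finset.mem_Ico]
        omega
      · intro p hp
        simp only [Finset.mem_Ico] at hp
        simp only [Finset.mem_range]
        omega
      · intro j hj
        simp only [Finset.mem_range] at hj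
        omega
      · intro p hp
        simp only [Finset.mem_Ico] at hp
        omega
      · intro j hj
        rfl
    have hsupp : (Function.support h2fun) ⊆ ↑(Finset.Ico a b) := by
      intro p hp
      simp only [Function.mem_support] at hp
      by_contra hmem
      have hBp : B (p, k - p) = ⊥ := by
        by_contra hne
        have h1 := hNb _ hne
        simp only [Finset.coe_Ico, Set.mem_Ico, not_and, not_lt] at hmem
        simp only at h1
        omega
      apply hp
      have hinf : ker δ₂ ⊓ B (p, k - p) = ⊥ := by rw [hBp, inf_bot_eq]
      rw [hh2fun]
      simp only
      rw [hinf]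
      haveI : Subsingleton (SubQuot (⊥ : Submodule K V) (range δ₂)) :=
        (Submodule.Quotient.mk_surjective _).subsingleton
      exact finrank_zero_of_subsingleton
    have hsum3 : ∑ᶠ p : ℤ, h2fun p = ∑ p ∈ Finset.Ico a b, h2fun p :=
      finsum_eq_sum_of_support_subset _ hsupp
    calc finrank K (SubQuot (ker d ⊓ F a) (range d)) = finrank K (C a) := E.finrank_eq
      _ ≤ ∑ j ∈ Finset.range (b - a).toNat, h2fun (b - (j + 1 : ℕ)) := hsum1
      _ = ∑ p ∈ Finset.Ico a b, h2fun p := hsum2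
      _ = ∑ᶠ p : ℤ, h2fun p := hsum3.symm



theorem frolicher_inequality
    {K V : Type*} [Field K] [AddCommGroup V] [Module K V]
    (B : ℤ × ℤ → Submodule K V) (hB : DirectSum.IsInternal B)
    (hbounded : {pq : ℤ × ℤ | B pq ≠ ⊥}.Finite)
    (δ₁ δ₂ : V →ₗ[K] V)
    (hd1 : ∀ p q : ℤ, (B (p, q)).map δ₁ ≤ B (p + 1, q))
    (hd2 : ∀ p q : ℤ, (B (p, q)).map δ₂ ≤ B (p, q + 1))
    (h1 : δ₁ ∘ₗ δ₁ = 0) (h2 : δ₂ ∘ₗ δ₂ = 0)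
    (h12 : δ₁ ∘ₗ δ₂ + δ₂ ∘ₗ δ₁ = 0)
    (hfin1 : ∀ p q : ℤ, FiniteDimensional K (SubQuot (ker δ₁ ⊓ B (p, q)) (range δ₁)))
    (hfin2 : ∀ p q : ℤ, FiniteDimensional K (SubQuot (ker δ₂ ⊓ B (p, q)) (range δ₂))) :
    ∀ k : ℤ,
      FiniteDimensional K
        (SubQuot (ker (δ₁ + δ₂) ⊓ TotalPiece B k) (range (δ₁ + δ₂))) ∧
      finrank K (SubQuot (ker (δ₁ + δ₂) ⊓ TotalPiece B k) (range (δ₁ + δ₂))) ≤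
        min (∑ᶠ p : ℤ, finrank K (SubQuot (ker δ₁ ⊓ B (p, k - p)) (range δ₁)))
            (∑ᶠ p : ℤ, finrank K (SubQuot (ker δ₂ ⊓ B (p, k - p)) (range δ₂))) := by

  intro k
  have hdd : ∀ x : V, (δ₁ + δ₂) ((δ₁ + δ₂) x) = 0 := by
    intro x
    have e1 := LinearMap.ext_iff.mp h1 x
    have e2 := LinearMap.ext_iff.mp h2 x
    have e12 := LinearMap.ext_iff.mp h12 x
    simp only [LinearMap.comp_apply, LinearMap.zero_apply, LinearMap.add_apply] at e1 e2 e12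
    simp only [LinearMap.add_apply, map_add, e1, e2, zero_add, add_zero]
    rw [add_comm]
    exact e12
  -- first application
  have app1 := aux_bound B hB hbounded δ₁ δ₂ hd1 hd2 hdd hfin2 k
  -- swapped grading
  set B' : ℤ × ℤ → Submodule K V := fun i => B (i.2, i.1) with hB'def
  have hB' : DirectSum.IsInternal B' := by
    have hBc := hB
    rw [DirectSum.isInternal_submodule_iff_iSupIndep_and_iSup_eq_top] at hBc ⊢
    obtain ⟨hind, hsup⟩ := hBc
    constructor
    · exact hind.comp (Equiv.prodComm ℤ ℤ).injective
    · exact ((Equiv.prodComm ℤ ℤ).iSup_comp (g := B)).trans hsup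
  have hbounded' : {pq : ℤ × ℤ | B' pq ≠ ⊥}.Finite := by
    have hpre : {pq : ℤ × ℤ | B' pq ≠ ⊥} = (Equiv.prodComm ℤ ℤ) ⁻¹' {pq | B pq ≠ ⊥} := rfl
    rw [hpre]
    exact hbounded.preimage ((Equiv.prodComm ℤ ℤ).injective.injOn)
  have hd1' : ∀ p q : ℤ, (B' (p, q)).map δ₂ ≤ B' (p + 1, q) := fun p q => hd2 q p
  have hd2' : ∀ p q : ℤ, (B' (p, q)).map δ₁ ≤ B' (p, q + 1) := fun p q => hd1 q p
  have hcomm : δ₂ + δ₁ = δ₁ + δ₂ := add_comm _ _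
  have hdd' : ∀ x : V, (δ₂ + δ₁) ((δ₂ + δ₁) x) = 0 := by rw [hcomm]; exact hdd
  have hfin2' : ∀ p q : ℤ, FiniteDimensional K (SubQuot (ker δ₁ ⊓ B' (p, q)) (range δ₁)) :=
    fun p q => hfin1 q p
  have app2 := aux_bound B' hB' hbounded' δ₂ δ₁ hd1' hd2' hdd' hfin2' k
  have hTP : TotalPiece B' k = TotalPiece B k := by
    apply le_antisymm
    · refine iSup_le fun p => ?_
      have h : ((k - p : ℤ), k - (k - p)) = ((k - p : ℤ), p) := by norm_num
      calc B' (p, k - p) = B (k - p, p) := rfl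
        _ = B (k - p, k - (k - p)) := by rw [h]
        _ ≤ ⨆ q : ℤ, B (q, k - q) := le_iSup (fun q : ℤ => B (q, k - q)) (k - p)
    · refine iSup_le fun p => ?_
      have h : ((k - p : ℤ), k - (k - p)) = ((k - p : ℤ), p) := by norm_num
      calc B (p, k - p) = B' (k - p, p) := rfl
        _ = B' (k - p, k - (k - p)) := by rw [h]
        _ ≤ ⨆ q : ℤ, B' (q, k - q) := le_iSup (fun q : ℤ => B' (q, k - q)) (k - p)
  have hsum' : (∑ᶠ p : ℤ, finrank K (SubQuot (ker δ₁ ⊓ B' (p, k - p)) (range δ₁))) =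
      ∑ᶠ p : ℤ, finrank K (SubQuot (ker δ₁ ⊓ B (p, k - p)) (range δ₁)) := by
    have hcg : ∀ p : ℤ, finrank K (SubQuot (ker δ₁ ⊓ B' (p, k - p)) (range δ₁)) =
        (fun q : ℤ => finrank K (SubQuot (ker δ₁ ⊓ B (q, k - q)) (range δ₁)))
          ((Equiv.subLeft k) p) := by
      intro p
      simp only [Equiv.subLeft_apply]
      have h : ((k - p : ℤ), k - (k - p)) = ((k - p : ℤ), p) := by norm_num
      show finrank K (SubQuot (ker δ₁ ⊓ B (k - p, p)) (range δ₁)) =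
        finrank K (SubQuot (ker δ₁ ⊓ B (k - p, k - (k - p))) (range δ₁))
      rw [h]
    exact (finsum_congr hcg).trans (finsum_comp_equiv (Equiv.subLeft k)
      (f := fun q : ℤ => finrank K (SubQuot (ker δ₁ ⊓ B (q, k - q)) (range δ₁))))
  rw [hcomm, hTP, hsum'] at app2
  exact ⟨app1.1, le_min app2.2 app1.2⟩
end

section
/- Let K be a field and V a K-vector space with linear endomorphisms δ₁, δ₂ : V → V satisfying δ₁² = 0, δ₂² = 0 and δ₁δ₂ + δ₂δ₁ = 0. Suppose that H_{δ₁}, H_{δ₂}, H_BC and H_A are all finite-dimensional. Then the six quotient spaces (im δ₁ ∩ im δ₂)/im(δ₁δ₂), (ker δ₁ ∩ im δ₂)/im(δ₁δ₂), (ker δ₂ ∩ im δ₁)/im(δ₁δ₂), ker(δ₁δ₂)/(ker δ₁ + im δ₂), ker(δ₁δ₂)/(ker δ₂ + im δ₁) and ker(δ₁δ₂)/(ker δ₁ + ker δ₂) are all finite-dimensional. -/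
open LinearMap Module

lemma subquot_findim_of_le_num {K V : Type*} [Field K] [AddCommGroup V] [Module K V]
    {M M' N : Submodule K V} (h : M ≤ M')
    (hfin : FiniteDimensional K (SubQuot M' N)) : FiniteDimensional K (SubQuot M N) := by
  let f : M →ₗ[K] SubQuot M' N := (N.comap M'.subtype).mkQ ∘ₗ Submodule.inclusion h
  have hker : ker f = N.comap M.subtype := by
    ext x
    simp [f, Submodule.Quotient.mk_eq_zero, Submodule.inclusion]
  have hinj : Function.Injective ((N.comap M.subtype).liftQ f hker.ge) := by
    rw [← LinearMap.ker_eq_bot, Submodule.ker_liftQ_eq_bot _ _ _ hker.le]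
  exact FiniteDimensional.of_injective _ hinj

lemma subquot_findim_of_le_den {K V : Type*} [Field K] [AddCommGroup V] [Module K V]
    {M N N' : Submodule K V} (h : N ≤ N')
    (hfin : FiniteDimensional K (SubQuot M N)) : FiniteDimensional K (SubQuot M N') := by
  have hle : N.comap M.subtype ≤ ker (N'.comap M.subtype).mkQ := by
    rw [Submodule.ker_mkQ]
    exact Submodule.comap_mono h
  have hsurj : Function.Surjective ((N.comap M.subtype).liftQ _ hle) :=
    Function.Surjective.of_comp (g := (N.comap M.subtype).mkQ)
      (by rw [← LinearMap.coe_comp, Submodule.liftQ_mkQ]; exact (N'.comap M.subtype).mkQ_surjective)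
  exact Module.Finite.of_surjective _ hsurj

theorem six_quotients_finiteDimensional
    {K V : Type*} [Field K] [AddCommGroup V] [Module K V]
    (δ₁ δ₂ : V →ₗ[K] V)
    (h1 : δ₁ ∘ₗ δ₁ = 0) (h2 : δ₂ ∘ₗ δ₂ = 0)
    (h12 : δ₁ ∘ₗ δ₂ + δ₂ ∘ₗ δ₁ = 0)
    (hfin1 : FiniteDimensional K (SubQuot (ker δ₁) (range δ₁)))
    (hfin2 : FiniteDimensional K (SubQuot (ker δ₂) (range δ₂)))
    (hfinBC : FiniteDimensional K (SubQuot (ker δ₁ ⊓ ker δ₂) (range (δ₁ ∘ₗ δ₂))))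
    (hfinA : FiniteDimensional K (SubQuot (ker (δ₁ ∘ₗ δ₂)) (range δ₁ ⊔ range δ₂))) :
    FiniteDimensional K (SubQuot (range δ₁ ⊓ range δ₂) (range (δ₁ ∘ₗ δ₂))) ∧
    FiniteDimensional K (SubQuot (ker δ₁ ⊓ range δ₂) (range (δ₁ ∘ₗ δ₂))) ∧
    FiniteDimensional K (SubQuot (ker δ₂ ⊓ range δ₁) (range (δ₁ ∘ₗ δ₂))) ∧
    FiniteDimensional K (SubQuot (ker (δ₁ ∘ₗ δ₂)) (ker δ₁ ⊔ range δ₂)) ∧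
    FiniteDimensional K (SubQuot (ker (δ₁ ∘ₗ δ₂)) (ker δ₂ ⊔ range δ₁)) ∧
    FiniteDimensional K (SubQuot (ker (δ₁ ∘ₗ δ₂)) (ker δ₁ ⊔ ker δ₂)) := by
  have hr1 : range δ₁ ≤ ker δ₁ := LinearMap.range_le_ker_iff.mpr h1
  have hr2 : range δ₂ ≤ ker δ₂ := LinearMap.range_le_ker_iff.mpr h2
  refine ⟨?_, ?_, ?_, ?_, ?_, ?_⟩
  · exact subquot_findim_of_le_num (inf_le_inf hr1 hr2) hfinBC
  · exact subquot_findim_of_le_num (inf_le_inf_left _ hr2) hfinBC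
  · exact subquot_findim_of_le_num
      (le_inf (inf_le_right.trans hr1) inf_le_left) hfinBC
  · exact subquot_findim_of_le_den (sup_le_sup_right hr1 _) hfinA
  · exact subquot_findim_of_le_den
      (sup_le le_sup_right (hr2.trans le_sup_left)) hfinA
  · exact subquot_findim_of_le_den (sup_le_sup hr1 hr2) hfinA
end

section
/- Let K be a field and V a K-vector space with linear endomorphisms δ₁, δ₂ : V → V satisfying δ₁² = 0, δ₂² = 0 and δ₁δ₂ + δ₂δ₁ = 0. Suppose that H_{δ₁}, H_{δ₂}, H_BC and H_A are all finite-dimensional. Then dim H_A = dim( (im δ₁ ∩ im δ₂)/im(δ₁δ₂) ) − dim( (ker δ₁ ∩ im δ₂)/im(δ₁δ₂) ) + dim H_{δ₁} + dim( ker(δ₁δ₂)/(ker δ₁ + im δ₂) ). -/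
open LinearMap Module

section Aux
variable {K V : Type*} [Field K] [AddCommGroup V] [Module K V]

lemma sq_comap_inf (M N : Submodule K V) :
    N.comap M.subtype = (N ⊓ M).comap M.subtype := by
  ext ⟨x, hx⟩; simp [hx]

/-- SubQuot only depends on `N ⊓ M`. -/
noncomputable def sqCongr (M : Submodule K V) {N N' : Submodule K V}
    (h : N ⊓ M = N' ⊓ M) : SubQuot M N ≃ₗ[K] SubQuot M N' :=
  Submodule.quotEquivOfEq _ _ (by rw [sq_comap_inf M N, h, ← sq_comap_inf])

/-- Second isomorphism theorem in SubQuot form. -/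
noncomputable def sqSup (M N : Submodule K V) :
    SubQuot M N ≃ₗ[K] SubQuot (M ⊔ N) N :=
  (Submodule.quotEquivOfEq _ _ (by rw [sq_comap_inf M N, inf_comm]; simp)) ≪≫ₗ
    LinearMap.quotientInfEquivSupQuotient M N

lemma sq_fin_mono {M' M N : Submodule K V} (h : M' ≤ M)
    [FiniteDimensional K (SubQuot M N)] : FiniteDimensional K (SubQuot M' N) := by
  let f : M' →ₗ[K] SubQuot M N := (N.comap M.subtype).mkQ ∘ₗ Submodule.inclusion h
  have hker : ker f = N.comap M'.subtype := by
    ext ⟨x, hx⟩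
    simp [f, Submodule.Quotient.mk_eq_zero]
  have e : SubQuot M' N ≃ₗ[K] range f :=
    (Submodule.quotEquivOfEq _ _ hker.symm) ≪≫ₗ f.quotKerEquivRange
  have : FiniteDimensional K (range f) := inferInstance
  exact e.symm.finiteDimensional

lemma sq_tower {N M P : Submodule K V} (hNM : N ≤ M) (hMP : M ≤ P)
    [FiniteDimensional K (SubQuot P N)] :
    finrank K (SubQuot P N) = finrank K (SubQuot M N) + finrank K (SubQuot P M) := by
  set N' := N.comap P.subtype with hN'
  set M' := M.comap P.subtype with hM'
  have hN'M' : N' ≤ M' := Submodule.comap_mono hNM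
  set M'' : Submodule K (P ⧸ N') := M'.map N'.mkQ with hM''
  have e1 : ((P ⧸ N') ⧸ M'') ≃ₗ[K] (P ⧸ M') :=
    Submodule.quotientQuotientEquivQuotient N' M' hN'M'
  let f : M →ₗ[K] (P ⧸ N') := N'.mkQ ∘ₗ Submodule.inclusion hMP
  have hker : ker f = N.comap M.subtype := by
    ext ⟨x, hx⟩
    simp [f, Submodule.Quotient.mk_eq_zero, hN']
  have hrange : range f = M'' := by
    rw [hM'']
    rw [show f = N'.mkQ ∘ₗ Submodule.inclusion hMP from rfl, range_comp,
      Submodule.range_inclusion]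
  have e2 : SubQuot M N ≃ₗ[K] M'' :=
    (Submodule.quotEquivOfEq _ _ hker.symm) ≪≫ₗ f.quotKerEquivRange ≪≫ₗ
      (LinearEquiv.ofEq _ _ hrange)
  have hfin : FiniteDimensional K (P ⧸ N') := ‹FiniteDimensional K (SubQuot P N)›
  have key := Submodule.finrank_quotient_add_finrank M''
  have eP : finrank K (SubQuot P N) = finrank K (P ⧸ N') := rfl
  have eM : finrank K (SubQuot P M) = finrank K (P ⧸ M') := rfl
  rw [eP, ← key, e2.finrank_eq, eM, ← e1.finrank_eq]
  omega

end Aux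

set_option maxHeartbeats 1000000 in
theorem dim_A_eq_varouchas
    {K V : Type*} [Field K] [AddCommGroup V] [Module K V]
    (δ₁ δ₂ : V →ₗ[K] V)
    (h1 : δ₁ ∘ₗ δ₁ = 0) (h2 : δ₂ ∘ₗ δ₂ = 0)
    (h12 : δ₁ ∘ₗ δ₂ + δ₂ ∘ₗ δ₁ = 0)
    (hfin1 : FiniteDimensional K (SubQuot (ker δ₁) (range δ₁)))
    (hfin2 : FiniteDimensional K (SubQuot (ker δ₂) (range δ₂)))
    (hfinBC : FiniteDimensional K (SubQuot (ker δ₁ ⊓ ker δ₂) (range (δ₁ ∘ₗ δ₂))))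
    (hfinA : FiniteDimensional K (SubQuot (ker (δ₁ ∘ₗ δ₂)) (range δ₁ ⊔ range δ₂))) :
    (finrank K (SubQuot (ker (δ₁ ∘ₗ δ₂)) (range δ₁ ⊔ range δ₂)) : ℤ) =
    (finrank K (SubQuot (range δ₁ ⊓ range δ₂) (range (δ₁ ∘ₗ δ₂))) : ℤ) -
      (finrank K (SubQuot (ker δ₁ ⊓ range δ₂) (range (δ₁ ∘ₗ δ₂))) : ℤ) +
      (finrank K (SubQuot (ker δ₁) (range δ₁)) : ℤ) +
      (finrank K (SubQuot (ker (δ₁ ∘ₗ δ₂)) (ker δ₁ ⊔ range δ₂)) : ℤ) := by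
  have hanti : ∀ x, δ₁ (δ₂ x) = - δ₂ (δ₁ x) := by
    intro x
    have := LinearMap.congr_fun h12 x
    simp at this
    exact eq_neg_of_add_eq_zero_left this
  have hR1K1 : range δ₁ ≤ ker δ₁ := by
    rintro _ ⟨y, rfl⟩; simpa using LinearMap.congr_fun h1 y
  have hR2K2 : range δ₂ ≤ ker δ₂ := by
    rintro _ ⟨y, rfl⟩; simpa using LinearMap.congr_fun h2 y
  have hR12R1 : range (δ₁ ∘ₗ δ₂) ≤ range δ₁ := by
    rintro _ ⟨y, rfl⟩; exact ⟨δ₂ y, rfl⟩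
  have hR12R2 : range (δ₁ ∘ₗ δ₂) ≤ range δ₂ := by
    rintro _ ⟨y, rfl⟩; exact ⟨-(δ₁ y), by simp [hanti y]⟩
  have hK1KA : ker δ₁ ≤ ker (δ₁ ∘ₗ δ₂) := by
    intro x hx
    have hx' : δ₁ x = 0 := hx
    simp [LinearMap.mem_ker, hanti, hx']
  have hR2KA : range δ₂ ≤ ker (δ₁ ∘ₗ δ₂) := by
    rintro _ ⟨y, rfl⟩
    have := LinearMap.congr_fun h2 y
    simp at this
    simp [LinearMap.mem_ker, this]
  -- Step A : tower  R1⊔R2 ≤ K1⊔R2 ≤ KA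
  have hA : finrank K (SubQuot (ker (δ₁ ∘ₗ δ₂)) (range δ₁ ⊔ range δ₂)) =
      finrank K (SubQuot (ker δ₁ ⊔ range δ₂) (range δ₁ ⊔ range δ₂)) +
      finrank K (SubQuot (ker (δ₁ ∘ₗ δ₂)) (ker δ₁ ⊔ range δ₂)) :=
    sq_tower (sup_le_sup_right hR1K1 _) (sup_le hK1KA hR2KA)
  -- Step B : second iso + modular law
  have hsup : ker δ₁ ⊔ (range δ₁ ⊔ range δ₂) = ker δ₁ ⊔ range δ₂ := by
    rw [← sup_assoc, sup_eq_left.mpr hR1K1]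
  have hB : finrank K (SubQuot (ker δ₁ ⊔ range δ₂) (range δ₁ ⊔ range δ₂)) =
      finrank K (SubQuot (ker δ₁) (range δ₁ ⊔ range δ₂)) := by
    rw [← hsup]
    exact (sqSup (ker δ₁) (range δ₁ ⊔ range δ₂)).finrank_eq.symm
  have hcong : (range δ₁ ⊔ range δ₂) ⊓ ker δ₁ =
      (range δ₁ ⊔ (ker δ₁ ⊓ range δ₂)) ⊓ ker δ₁ := by
    rw [sup_inf_assoc_of_le _ hR1K1, inf_comm (ker δ₁) (range δ₂)]
    exact (inf_eq_left.mpr (sup_le hR1K1 inf_le_right)).symm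
  have hB2 : finrank K (SubQuot (ker δ₁) (range δ₁ ⊔ range δ₂)) =
      finrank K (SubQuot (ker δ₁) (range δ₁ ⊔ (ker δ₁ ⊓ range δ₂))) :=
    (sqCongr (ker δ₁) hcong).finrank_eq
  -- Step C : tower  R1 ≤ R1 ⊔ (K1⊓R2) ≤ K1
  have hC : finrank K (SubQuot (ker δ₁) (range δ₁)) =
      finrank K (SubQuot (range δ₁ ⊔ (ker δ₁ ⊓ range δ₂)) (range δ₁)) +
      finrank K (SubQuot (ker δ₁) (range δ₁ ⊔ (ker δ₁ ⊓ range δ₂))) :=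
    sq_tower le_sup_left (sup_le hR1K1 inf_le_left)
  -- Step D : second iso + congr
  have hD : finrank K (SubQuot (range δ₁ ⊔ (ker δ₁ ⊓ range δ₂)) (range δ₁)) =
      finrank K (SubQuot (ker δ₁ ⊓ range δ₂) (range δ₁)) := by
    rw [sup_comm (range δ₁) (ker δ₁ ⊓ range δ₂)]
    exact (sqSup (ker δ₁ ⊓ range δ₂) (range δ₁)).finrank_eq.symm
  have hcong2 : range δ₁ ⊓ (ker δ₁ ⊓ range δ₂) =
      (range δ₁ ⊓ range δ₂) ⊓ (ker δ₁ ⊓ range δ₂) := by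
    rw [← inf_assoc, inf_eq_left.mpr hR1K1,
      inf_eq_left.mpr (le_inf (inf_le_left.trans hR1K1) inf_le_right)]
  have hD2 : finrank K (SubQuot (ker δ₁ ⊓ range δ₂) (range δ₁)) =
      finrank K (SubQuot (ker δ₁ ⊓ range δ₂) (range δ₁ ⊓ range δ₂)) :=
    (sqCongr (ker δ₁ ⊓ range δ₂) hcong2).finrank_eq
  -- Step E : tower  R12 ≤ R1⊓R2 ≤ K1⊓R2
  have hfinE : FiniteDimensional K (SubQuot (ker δ₁ ⊓ range δ₂) (range (δ₁ ∘ₗ δ₂))) :=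
    sq_fin_mono (inf_le_inf_left _ hR2K2)
  have hE : finrank K (SubQuot (ker δ₁ ⊓ range δ₂) (range (δ₁ ∘ₗ δ₂))) =
      finrank K (SubQuot (range δ₁ ⊓ range δ₂) (range (δ₁ ∘ₗ δ₂))) +
      finrank K (SubQuot (ker δ₁ ⊓ range δ₂) (range δ₁ ⊓ range δ₂)) :=
    sq_tower (le_inf hR12R1 hR12R2) (inf_le_inf_right _ hR1K1)
  omega
end

section
/- Let K be a field and V a K-vector space with linear endomorphisms δ₁, δ₂ : V → V satisfying δ₁² = 0, δ₂² = 0 and δ₁δ₂ + δ₂δ₁ = 0. Suppose that H_{δ₁}, H_{δ₂}, H_BC and H_A are all finite-dimensional. Then dim H_BC = dim( (im δ₁ ∩ ker δ₂)/im(δ₁δ₂) ) + dim H_{δ₁} − dim( ker(δ₁δ₂)/(ker δ₂ + im δ₁) ) + dim( ker(δ₁δ₂)/(ker δ₁ + ker δ₂) ). -/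
open LinearMap Module

section Aux

variable {K V : Type*} [Field K] [AddCommGroup V] [Module K V]

/-- Generic tower lemma for quotients. -/
lemma finrank_quot_tower {W : Type*} [AddCommGroup W] [Module K W]
    (N P : Submodule K W) (h : N ≤ P) [FiniteDimensional K (W ⧸ N)] :
    finrank K (W ⧸ N) = finrank K (W ⧸ P) + finrank K (P ⧸ N.comap P.subtype) := by
  have e1 : ((W ⧸ N) ⧸ (P.map N.mkQ)) ≃ₗ[K] W ⧸ P :=
    Submodule.quotientQuotientEquivQuotient N P h
  have hker : ker (N.mkQ ∘ₗ P.subtype) = N.comap P.subtype := by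
    rw [LinearMap.ker_comp, Submodule.ker_mkQ]
  have hrange : range (N.mkQ ∘ₗ P.subtype) = P.map N.mkQ := by
    rw [LinearMap.range_comp, Submodule.range_subtype]
  have e2 : (P ⧸ N.comap P.subtype) ≃ₗ[K] (P.map N.mkQ : Submodule K (W ⧸ N)) :=
    (Submodule.quotEquivOfEq _ _ hker.symm).trans
      ((N.mkQ ∘ₗ P.subtype).quotKerEquivRange.trans (LinearEquiv.ofEq _ _ hrange))
  have hmain := Submodule.finrank_quotient_add_finrank (P.map N.mkQ : Submodule K (W ⧸ N))
  rw [e1.finrank_eq, ← e2.finrank_eq] at hmain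
  omega

lemma subquot_tower (B A C : Submodule K V) (hBA : B ≤ A) (hAC : A ≤ C)
    [FiniteDimensional K (SubQuot C B)] :
    finrank K (SubQuot C B) = finrank K (SubQuot C A) + finrank K (SubQuot A B) := by
  have h := finrank_quot_tower (K := K) (B.comap C.subtype) (A.comap C.subtype)
    (Submodule.comap_mono hBA)
  have e : ((A.comap C.subtype) ⧸
      ((B.comap C.subtype).comap (A.comap C.subtype).subtype)) ≃ₗ[K] SubQuot A B := by
    refine Submodule.Quotient.equiv _ _ (Submodule.comapSubtypeEquivOfLe hAC) ?_
    ext ⟨x, hx⟩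
    simp only [Submodule.comapSubtypeEquivOfLe, Submodule.mem_map, Submodule.mem_comap]
    simp
    constructor
    · rintro ⟨a, haB, _, _, h⟩; have hax : a = x := congrArg Subtype.val h; exact hax ▸ haB
    · intro hBx; exact ⟨x, hBx, hAC hx, hx, rfl⟩
  rw [e.finrank_eq] at h
  exact h

lemma subquot_fin (M A B : Submodule K V) (h : B ≤ A)
    (hfin : FiniteDimensional K (SubQuot M B)) : FiniteDimensional K (SubQuot M A) :=
  @LinearEquiv.finiteDimensional _ _ _ _ _ _ _ _
    (Submodule.quotientQuotientEquivQuotient (B.comap M.subtype) (A.comap M.subtype)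
      (Submodule.comap_mono h)) (@FiniteDimensional.finiteDimensional_quotient _ _ _ _ _ hfin _)

lemma comap_subtype_eq_of_inf_eq (M N N' : Submodule K V) (h : N ⊓ M = N' ⊓ M) :
    N.comap M.subtype = N'.comap M.subtype := by
  ext ⟨x, hx⟩
  have : x ∈ N ⊓ M ↔ x ∈ N' ⊓ M := by rw [h]
  simpa [Submodule.mem_inf, hx] using this

end Aux

set_option maxHeartbeats 1600000 in
theorem dim_BC_eq_varouchas
    {K V : Type*} [Field K] [AddCommGroup V] [Module K V]
    (δ₁ δ₂ : V →ₗ[K] V)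
    (h1 : δ₁ ∘ₗ δ₁ = 0) (h2 : δ₂ ∘ₗ δ₂ = 0)
    (h12 : δ₁ ∘ₗ δ₂ + δ₂ ∘ₗ δ₁ = 0)
    (hfin1 : FiniteDimensional K (SubQuot (ker δ₁) (range δ₁)))
    (hfin2 : FiniteDimensional K (SubQuot (ker δ₂) (range δ₂)))
    (hfinBC : FiniteDimensional K (SubQuot (ker δ₁ ⊓ ker δ₂) (range (δ₁ ∘ₗ δ₂))))
    (hfinA : FiniteDimensional K (SubQuot (ker (δ₁ ∘ₗ δ₂)) (range δ₁ ⊔ range δ₂))) :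
    (finrank K (SubQuot (ker δ₁ ⊓ ker δ₂) (range (δ₁ ∘ₗ δ₂))) : ℤ) =
    (finrank K (SubQuot (range δ₁ ⊓ ker δ₂) (range (δ₁ ∘ₗ δ₂))) : ℤ) +
      (finrank K (SubQuot (ker δ₁) (range δ₁)) : ℤ) -
      (finrank K (SubQuot (ker (δ₁ ∘ₗ δ₂)) (ker δ₂ ⊔ range δ₁)) : ℤ) +
      (finrank K (SubQuot (ker (δ₁ ∘ₗ δ₂)) (ker δ₁ ⊔ ker δ₂)) : ℤ) := by
  have h1' : ∀ x, δ₁ (δ₁ x) = 0 := fun x => by simpa using LinearMap.ext_iff.mp h1 x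
  have h2' : ∀ x, δ₂ (δ₂ x) = 0 := fun x => by simpa using LinearMap.ext_iff.mp h2 x
  have h12' : ∀ x, δ₁ (δ₂ x) + δ₂ (δ₁ x) = 0 := fun x => by
    simpa using LinearMap.ext_iff.mp h12 x
  have hr1k1 : range δ₁ ≤ ker δ₁ := by
    rintro x ⟨y, rfl⟩; exact h1' y
  have hr2k2 : range δ₂ ≤ ker δ₂ := by
    rintro x ⟨y, rfl⟩; exact h2' y
  have hB1 : range (δ₁ ∘ₗ δ₂) ≤ range δ₁ ⊓ ker δ₂ := by
    rintro x ⟨y, rfl⟩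
    refine ⟨⟨δ₂ y, rfl⟩, ?_⟩
    have := h12' (δ₂ y)
    simp only [LinearMap.mem_ker, LinearMap.coe_comp, Function.comp_apply]
    rw [h2' y] at this
    simpa using this
  have hk1K : ker δ₁ ≤ ker (δ₁ ∘ₗ δ₂) := by
    intro x hx
    have := h12' x
    simp only [LinearMap.mem_ker] at hx ⊢
    simp only [LinearMap.coe_comp, Function.comp_apply]
    rw [hx, map_zero, add_zero] at this
    exact this
  have hk2K : ker δ₂ ≤ ker (δ₁ ∘ₗ δ₂) := by
    intro x hx
    simp only [LinearMap.mem_ker] at hx ⊢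
    simp [LinearMap.coe_comp, Function.comp_apply, hx]
  have hr1k2_le : range δ₁ ⊓ ker δ₂ ≤ ker δ₁ ⊓ ker δ₂ :=
    inf_le_inf_right _ hr1k1
  -- Step 1 : finrank T2 = finrank Q + finrank T1
  have step1 : finrank K (SubQuot (ker δ₁ ⊓ ker δ₂) (range (δ₁ ∘ₗ δ₂))) =
      finrank K (SubQuot (ker δ₁ ⊓ ker δ₂) (range δ₁ ⊓ ker δ₂)) +
      finrank K (SubQuot (range δ₁ ⊓ ker δ₂) (range (δ₁ ∘ₗ δ₂))) :=
    subquot_tower _ _ _ hB1 hr1k2_le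
  -- Step 2 : finrank T3 = finrank X + finrank Q
  haveI : FiniteDimensional K (SubQuot (ker δ₁) ((ker δ₁ ⊓ ker δ₂) ⊔ range δ₁)) :=
    subquot_fin _ _ (range δ₁) le_sup_right hfin1
  have step2 : finrank K (SubQuot (ker δ₁) (range δ₁)) =
      finrank K (SubQuot (ker δ₁) ((ker δ₁ ⊓ ker δ₂) ⊔ range δ₁)) +
      finrank K (SubQuot ((ker δ₁ ⊓ ker δ₂) ⊔ range δ₁) (range δ₁)) :=
    subquot_tower _ _ _ le_sup_right
      (sup_le inf_le_left hr1k1)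
  -- second isomorphism theorem : SubQuot ((k1⊓k2)⊔r1) r1 ≃ SubQuot (k1⊓k2) (r1⊓k2)
  have hinf : (ker δ₁ ⊓ ker δ₂) ⊓ range δ₁ = range δ₁ ⊓ ker δ₂ := by
    rw [inf_comm, ← inf_assoc, inf_eq_left.mpr hr1k1]
  have e2 := LinearMap.quotientInfEquivSupQuotient (ker δ₁ ⊓ ker δ₂) (range δ₁)
  rw [← Submodule.comap_inf, hinf] at e2
  have hQ : finrank K (SubQuot ((ker δ₁ ⊓ ker δ₂) ⊔ range δ₁) (range δ₁)) =
      finrank K (SubQuot (ker δ₁ ⊓ ker δ₂) (range δ₁ ⊓ ker δ₂)) := e2.finrank_eq.symm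
  -- identify X with SubQuot (ker δ₁) (ker δ₂ ⊔ range δ₁) via the modular law
  have hmod : ((ker δ₁ ⊓ ker δ₂) ⊔ range δ₁) ⊓ ker δ₁ = (ker δ₂ ⊔ range δ₁) ⊓ ker δ₁ := by
    rw [inf_eq_left.mpr (sup_le inf_le_left hr1k1), sup_comm (ker δ₂) (range δ₁),
      sup_inf_assoc_of_le (ker δ₂) hr1k1, sup_comm, inf_comm (ker δ₂) (ker δ₁)]
  have hX : finrank K (SubQuot (ker δ₁) ((ker δ₁ ⊓ ker δ₂) ⊔ range δ₁)) =
      finrank K (SubQuot (ker δ₁) (ker δ₂ ⊔ range δ₁)) :=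
    (Submodule.quotEquivOfEq _ _
      (comap_subtype_eq_of_inf_eq _ _ _ hmod)).finrank_eq
  -- Step 3 : finrank T4 = finrank T5 + finrank X'
  have hBA3 : ker δ₂ ⊔ range δ₁ ≤ ker δ₁ ⊔ ker δ₂ :=
    sup_le le_sup_right (hr1k1.trans le_sup_left)
  haveI : FiniteDimensional K (SubQuot (ker (δ₁ ∘ₗ δ₂)) (ker δ₂ ⊔ range δ₁)) :=
    subquot_fin (ker (δ₁ ∘ₗ δ₂)) (ker δ₂ ⊔ range δ₁) (range δ₁ ⊔ range δ₂)
      (sup_le le_sup_right (hr2k2.trans le_sup_left)) hfinA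
  have step3 : finrank K (SubQuot (ker (δ₁ ∘ₗ δ₂)) (ker δ₂ ⊔ range δ₁)) =
      finrank K (SubQuot (ker (δ₁ ∘ₗ δ₂)) (ker δ₁ ⊔ ker δ₂)) +
      finrank K (SubQuot (ker δ₁ ⊔ ker δ₂) (ker δ₂ ⊔ range δ₁)) :=
    subquot_tower _ _ _ hBA3 (sup_le hk1K hk2K)
  -- identify the last piece with X via second isomorphism theorem
  have e3 := LinearMap.quotientInfEquivSupQuotient (ker δ₁) (ker δ₂ ⊔ range δ₁)
  have hsup : ker δ₁ ⊔ (ker δ₂ ⊔ range δ₁) = ker δ₁ ⊔ ker δ₂ := by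
    apply le_antisymm
    · exact sup_le le_sup_left (sup_le le_sup_right (hr1k1.trans le_sup_left))
    · exact sup_le le_sup_left (le_sup_left.trans le_sup_right)
  rw [hsup, ← Submodule.comap_inf] at e3
  have hinf2 : (ker δ₁ ⊓ (ker δ₂ ⊔ range δ₁)) ⊓ ker δ₁ = (ker δ₂ ⊔ range δ₁) ⊓ ker δ₁ := by
    rw [inf_comm (ker δ₁) (ker δ₂ ⊔ range δ₁), inf_assoc, inf_idem]
  have hX2 : finrank K (SubQuot (ker δ₁ ⊔ ker δ₂) (ker δ₂ ⊔ range δ₁)) =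
      finrank K (SubQuot (ker δ₁) (ker δ₂ ⊔ range δ₁)) := by
    rw [← e3.finrank_eq]
    exact (Submodule.quotEquivOfEq _ _
      (comap_subtype_eq_of_inf_eq _ _ _ hinf2)).finrank_eq
  rw [hQ, hX] at step2
  rw [hX2] at step3
  omega
end

section
/- Let K be a field and V a K-vector space with linear endomorphisms δ₁, δ₂ : V → V satisfying δ₁² = 0, δ₂² = 0 and δ₁δ₂ + δ₂δ₁ = 0. If im δ₁ ∩ im δ₂ ⊆ im(δ₁δ₂), then ker(δ₁+δ₂) ⊆ (ker δ₁ ∩ ker δ₂) + im(δ₁+δ₂); equivalently, the natural map from Bott-Chern cohomology to the cohomology of δ₁+δ₂ induced by the identity is surjective. -/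
open LinearMap Module

theorem BC_to_total_surjective
    {K V : Type*} [Field K] [AddCommGroup V] [Module K V]
    (δ₁ δ₂ : V →ₗ[K] V)
    (h1 : δ₁ ∘ₗ δ₁ = 0) (h2 : δ₂ ∘ₗ δ₂ = 0)
    (h12 : δ₁ ∘ₗ δ₂ + δ₂ ∘ₗ δ₁ = 0)
    (h : range δ₁ ⊓ range δ₂ ≤ range (δ₁ ∘ₗ δ₂)) :
    ker (δ₁ + δ₂) ≤ (ker δ₁ ⊓ ker δ₂) ⊔ range (δ₁ + δ₂) := by
  intro x hx
  have hx' : δ₁ x + δ₂ x = 0 := hx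
  have hmem : δ₁ x ∈ range δ₁ ⊓ range δ₂ := by
    refine ⟨⟨x, rfl⟩, ⟨-x, ?_⟩⟩
    simp only [map_neg]
    linear_combination (norm := module) -hx'
  obtain ⟨y, hy⟩ := h hmem
  have h1y : δ₁ (δ₁ y) = 0 := congrFun (congrArg DFunLike.coe h1) y
  have h2y : δ₂ (δ₂ y) = 0 := congrFun (congrArg DFunLike.coe h2) y
  have h12y : δ₁ (δ₂ y) + δ₂ (δ₁ y) = 0 := congrFun (congrArg DFunLike.coe h12) y
  have hy' : δ₁ (δ₂ y) = δ₁ x := hy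
  have e2 : δ₂ (δ₁ y) = -δ₁ x := by
    rw [← hy']; exact eq_neg_of_add_eq_zero_right h12y
  have e3 : δ₂ x = -δ₁ x := eq_neg_of_add_eq_zero_right hx'
  have hk : x - (δ₁ + δ₂) y ∈ ker δ₁ ⊓ ker δ₂ := by
    constructor
    · show δ₁ (x - (δ₁ + δ₂) y) = 0
      simp only [map_sub, LinearMap.add_apply, map_add, h1y, hy']
      abel
    · show δ₂ (x - (δ₁ + δ₂) y) = 0
      simp only [map_sub, LinearMap.add_apply, map_add, h2y, e2, e3]
      abel
  have : x = (x - (δ₁ + δ₂) y) + (δ₁ + δ₂) y := by abel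
  rw [this]
  exact Submodule.add_mem_sup hk ⟨y, rfl⟩
end

section
/- Let K be a field and V a K-vector space with linear endomorphisms δ₁, δ₂ : V → V satisfying δ₁² = 0, δ₂² = 0 and δ₁δ₂ + δ₂δ₁ = 0. If ker(δ₁δ₂) ⊆ ker δ₁ + ker δ₂, then ker(δ₁+δ₂) ∩ (im δ₁ + im δ₂) ⊆ im(δ₁+δ₂); equivalently, the natural map from the cohomology of δ₁+δ₂ to the Aeppli cohomology induced by the identity is injective. -/
open LinearMap Module

theorem total_to_A_injective
    {K V : Type*} [Field K] [AddCommGroup V] [Module K V]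
    (δ₁ δ₂ : V →ₗ[K] V)
    (h1 : δ₁ ∘ₗ δ₁ = 0) (h2 : δ₂ ∘ₗ δ₂ = 0)
    (h12 : δ₁ ∘ₗ δ₂ + δ₂ ∘ₗ δ₁ = 0)
    (h : ker (δ₁ ∘ₗ δ₂) ≤ ker δ₁ ⊔ ker δ₂) :
    ker (δ₁ + δ₂) ⊓ (range δ₁ ⊔ range δ₂) ≤ range (δ₁ + δ₂) := by
  rintro x ⟨hx, hmem⟩
  rw [SetLike.mem_coe, Submodule.mem_sup] at hmem
  rw [SetLike.mem_coe] at hx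
  obtain ⟨y, ⟨a, rfl⟩, z, ⟨b, rfl⟩, rfl⟩ := hmem
  have e11 : δ₁ (δ₁ a) = 0 := congrFun (congrArg DFunLike.coe h1) a
  have e22 : δ₂ (δ₂ b) = 0 := congrFun (congrArg DFunLike.coe h2) b
  have anti : ∀ w, δ₂ (δ₁ w) = - δ₁ (δ₂ w) := by
    intro w
    have := congrFun (congrArg DFunLike.coe h12) w
    simp only [LinearMap.add_apply, LinearMap.comp_apply, LinearMap.zero_apply] at this
    exact eq_neg_of_add_eq_zero_right this
  have hx' : δ₁ (δ₂ (b - a)) = 0 := by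
    have hx0 : (δ₁ + δ₂) (δ₁ a + δ₂ b) = 0 := hx
    simp only [LinearMap.add_apply, map_add, e11, e22, anti, zero_add, add_zero] at hx0
    rw [map_sub, map_sub, sub_eq_zero]
    exact (neg_add_eq_zero.mp hx0).symm
  have hba : b - a ∈ ker δ₁ ⊔ ker δ₂ := h (by simpa [LinearMap.mem_ker] using hx')
  rw [Submodule.mem_sup] at hba
  obtain ⟨u, hu, v, hv, huv⟩ := hba
  rw [LinearMap.mem_ker] at hu hv
  refine ⟨a + u, ?_⟩
  have hb : b = a + u + v := by rw [add_assoc, huv]; abel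
  simp only [LinearMap.add_apply, map_add, hu, hb, hv]
  abel
end

section
/- Let K be a field and V a K-vector space with linear endomorphisms δ₁, δ₂ : V → V satisfying δ₁² = 0, δ₂² = 0 and δ₁δ₂ + δ₂δ₁ = 0. Then ker δ₁ ∩ ker δ₂ ∩ (im δ₁ + im δ₂) = im(δ₁δ₂) if and only if ker(δ₁δ₂) = (ker δ₁ ∩ ker δ₂) + im δ₁ + im δ₂ (i.e. the natural map from Bott-Chern to Aeppli cohomology induced by the identity is injective if and only if it is surjective). -/
open LinearMap Module

theorem BC_to_A_injective_iff_surjective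
    {K V : Type*} [Field K] [AddCommGroup V] [Module K V]
    (δ₁ δ₂ : V →ₗ[K] V)
    (h1 : δ₁ ∘ₗ δ₁ = 0) (h2 : δ₂ ∘ₗ δ₂ = 0)
    (h12 : δ₁ ∘ₗ δ₂ + δ₂ ∘ₗ δ₁ = 0) :
    ker δ₁ ⊓ ker δ₂ ⊓ (range δ₁ ⊔ range δ₂) = range (δ₁ ∘ₗ δ₂) ↔
    ker (δ₁ ∘ₗ δ₂) = (ker δ₁ ⊓ ker δ₂) ⊔ range δ₁ ⊔ range δ₂ := by
  have H1 : ∀ v, δ₁ (δ₁ v) = 0 := fun v => by simpa using LinearMap.congr_fun h1 v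
  have H2 : ∀ v, δ₂ (δ₂ v) = 0 := fun v => by simpa using LinearMap.congr_fun h2 v
  have H12 : ∀ v, δ₁ (δ₂ v) = - δ₂ (δ₁ v) := fun v => by
    have := LinearMap.congr_fun h12 v
    simp only [LinearMap.add_apply, LinearMap.comp_apply, LinearMap.zero_apply] at this
    exact eq_neg_of_add_eq_zero_left this
  -- trivial inclusion 1 : range (δ₁ ∘ₗ δ₂) ≤ ker δ₁ ⊓ ker δ₂ ⊓ (range δ₁ ⊔ range δ₂)
  have triv1 : range (δ₁ ∘ₗ δ₂) ≤ ker δ₁ ⊓ ker δ₂ ⊓ (range δ₁ ⊔ range δ₂) := by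
    rintro x ⟨v, rfl⟩
    refine ⟨⟨?_, ?_⟩, ?_⟩
    · simp [LinearMap.mem_ker, H1]
    · simp [LinearMap.mem_ker, H12, H2]
    · exact Submodule.mem_sup_left ⟨δ₂ v, rfl⟩
  -- trivial inclusion 2 : sup ≤ ker (δ₁ ∘ₗ δ₂)
  have triv2 : (ker δ₁ ⊓ ker δ₂) ⊔ range δ₁ ⊔ range δ₂ ≤ ker (δ₁ ∘ₗ δ₂) := by
    refine sup_le (sup_le ?_ ?_) ?_
    · rintro x ⟨-, hx2⟩
      simp only [SetLike.mem_coe, LinearMap.mem_ker] at hx2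
      simp [LinearMap.mem_ker, hx2]
    · rintro x ⟨v, rfl⟩
      simp [LinearMap.mem_ker, H12, H1]
    · rintro x ⟨v, rfl⟩
      simp [LinearMap.mem_ker, H2]
  constructor
  · -- injective → surjective
    intro h
    refine le_antisymm ?_ triv2
    intro x hx
    simp only [LinearMap.mem_ker, LinearMap.comp_apply] at hx
    -- δ₂ x ∈ ker δ₁ ⊓ ker δ₂ ⊓ (range δ₁ ⊔ range δ₂)
    have hmem : δ₂ x ∈ ker δ₁ ⊓ ker δ₂ ⊓ (range δ₁ ⊔ range δ₂) := by
      refine ⟨⟨hx, by simp [LinearMap.mem_ker, H2]⟩, Submodule.mem_sup_right ⟨x, rfl⟩⟩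
    rw [h] at hmem
    obtain ⟨w, hw⟩ := hmem
    simp only [LinearMap.comp_apply] at hw
    -- δ₁ x ∈ ker δ₁ ⊓ ker δ₂ ⊓ (range δ₁ ⊔ range δ₂)
    have hmem' : δ₁ x ∈ ker δ₁ ⊓ ker δ₂ ⊓ (range δ₁ ⊔ range δ₂) := by
      refine ⟨⟨by simp [LinearMap.mem_ker, H1], ?_⟩, Submodule.mem_sup_left ⟨x, rfl⟩⟩
      simp only [SetLike.mem_coe, LinearMap.mem_ker]
      rw [← neg_eq_zero, ← H12, hx]
    rw [h] at hmem'
    obtain ⟨w', hw'⟩ := hmem'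
    simp only [LinearMap.comp_apply] at hw'
    -- x = (x + δ₁ w - δ₂ w') + (- δ₁ w) + δ₂ w'
    have key : x = ((x + δ₁ w - δ₂ w') + (- δ₁ w)) + δ₂ w' := by abel
    rw [key]
    refine Submodule.add_mem_sup (Submodule.add_mem_sup ?_ ?_) ⟨w', rfl⟩
    · constructor
      · simp only [SetLike.mem_coe, LinearMap.mem_ker, map_add, map_sub, hw', H1]
        abel
      · simp only [SetLike.mem_coe, LinearMap.mem_ker, map_add, map_sub, H2]
        have : δ₂ (δ₁ w) = - δ₂ x := by
          rw [← hw, H12 w, neg_neg]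
        rw [this]; abel
    · exact ⟨-w, by simp⟩
  · -- surjective → injective
    intro h
    refine le_antisymm ?_ triv1
    rintro x ⟨⟨hx1, hx2⟩, hxI⟩
    simp only [SetLike.mem_coe, LinearMap.mem_ker] at hx1 hx2
    rw [SetLike.mem_coe, Submodule.mem_sup] at hxI
    obtain ⟨y, ⟨a, rfl⟩, z, ⟨b, rfl⟩, rfl⟩ := hxI
    -- δ₁ (δ₁ a + δ₂ b) = 0 gives δ₁ (δ₂ b) = 0
    have hb : δ₁ (δ₂ b) = 0 := by
      have := hx1
      simpa [map_add, H1] using this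
    have hbmem : b ∈ (ker δ₁ ⊓ ker δ₂) ⊔ range δ₁ ⊔ range δ₂ := by
      rw [← h]; simpa [LinearMap.mem_ker] using hb
    rw [Submodule.mem_sup] at hbmem
    obtain ⟨s, hs, t2, ⟨v, rfl⟩, hb2⟩ := hbmem
    rw [Submodule.mem_sup] at hs
    obtain ⟨k, hk, t1, ⟨u, rfl⟩, rfl⟩ := hs
    -- δ₂ b = δ₂ (δ₁ u) = - δ₁ (δ₂ u)
    have hdb : δ₂ b = - δ₁ (δ₂ u) := by
      rw [← hb2]
      simp only [map_add, H2, add_zero]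
      rw [hk.2, H12]
      abel
    -- x = δ₁ a + δ₂ b = δ₁ (a - δ₂ u)
    have hx' : δ₁ a + δ₂ b = δ₁ (a - δ₂ u) := by
      rw [hdb, map_sub]; abel
    -- δ₂ x = 0 gives δ₁ (δ₂ (a - δ₂ u)) = 0
    have hc : δ₁ (δ₂ (a - δ₂ u)) = 0 := by
      rw [H12, neg_eq_zero, ← hx']
      exact hx2
    have hcmem : a - δ₂ u ∈ (ker δ₁ ⊓ ker δ₂) ⊔ range δ₁ ⊔ range δ₂ := by
      rw [← h]; simpa [LinearMap.mem_ker] using hc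
    rw [Submodule.mem_sup] at hcmem
    obtain ⟨s, hs, t2, ⟨q, rfl⟩, hc2⟩ := hcmem
    rw [Submodule.mem_sup] at hs
    obtain ⟨k', hk', t1, ⟨p, rfl⟩, rfl⟩ := hs
    refine ⟨q, ?_⟩
    simp only [LinearMap.comp_apply]
    rw [hx', ← hc2]
    simp [map_add, H1, show δ₁ k' = 0 from hk'.1]
end

section
/- Let K be a field and V a K-vector space with linear endomorphisms δ₁, δ₂ : V → V satisfying δ₁² = 0, δ₂² = 0 and δ₁δ₂ + δ₂δ₁ = 0. Then ker δ₁ ∩ ker δ₂ ∩ (im δ₁ + im δ₂) = im(δ₁δ₂) if and only if both ker δ₂ ∩ im δ₁ ⊆ im(δ₁δ₂) and ker δ₁ ∩ im δ₂ ⊆ im(δ₁δ₂) (i.e. the δ₁δ₂-Lemma holds if and only if the natural maps from Bott-Chern cohomology to H_{δ₁} and to H_{δ₂} induced by the identity are both injective). -/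
open LinearMap Module

theorem lemma_iff_BC_to_dolbeault_injective
    {K V : Type*} [Field K] [AddCommGroup V] [Module K V]
    (δ₁ δ₂ : V →ₗ[K] V)
    (h1 : δ₁ ∘ₗ δ₁ = 0) (h2 : δ₂ ∘ₗ δ₂ = 0)
    (h12 : δ₁ ∘ₗ δ₂ + δ₂ ∘ₗ δ₁ = 0) :
    ker δ₁ ⊓ ker δ₂ ⊓ (range δ₁ ⊔ range δ₂) = range (δ₁ ∘ₗ δ₂) ↔
    (ker δ₂ ⊓ range δ₁ ≤ range (δ₁ ∘ₗ δ₂) ∧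
      ker δ₁ ⊓ range δ₂ ≤ range (δ₁ ∘ₗ δ₂)) := by
  have h1' : ∀ v, δ₁ (δ₁ v) = 0 := fun v => by simpa using LinearMap.congr_fun h1 v
  have h2' : ∀ v, δ₂ (δ₂ v) = 0 := fun v => by simpa using LinearMap.congr_fun h2 v
  have h12' : ∀ v, δ₁ (δ₂ v) + δ₂ (δ₁ v) = 0 := fun v => by
    simpa using LinearMap.congr_fun h12 v
  constructor
  · intro h
    constructor
    · rintro x ⟨hk2, y, rfl⟩
      rw [← h]
      exact ⟨⟨h1' y, hk2⟩, Submodule.mem_sup_left ⟨y, rfl⟩⟩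
    · rintro x ⟨hk1, y, rfl⟩
      rw [← h]
      exact ⟨⟨hk1, h2' y⟩, Submodule.mem_sup_right ⟨y, rfl⟩⟩
  · rintro ⟨hA, hB⟩
    apply le_antisymm
    · rintro x ⟨⟨hk1, hk2⟩, hsum⟩
      obtain ⟨a, ⟨u, rfl⟩, b, ⟨w, rfl⟩, rfl⟩ := Submodule.mem_sup.mp hsum
      have hk1 : δ₁ (δ₂ w) = 0 := by
        have := mem_ker.mp hk1; rwa [map_add, h1' u, zero_add] at this
      have hk2 : δ₂ (δ₁ u) = 0 := by
        have := mem_ker.mp hk2; rwa [map_add, h2' w, add_zero] at this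
      have m1 : δ₁ u ∈ ker δ₂ ⊓ range δ₁ := ⟨hk2, u, rfl⟩
      have m2 : δ₂ w ∈ ker δ₁ ⊓ range δ₂ := ⟨hk1, w, rfl⟩
      exact Submodule.add_mem _ (hA m1) (hB m2)
    · rintro x ⟨v, rfl⟩
      have hk2 : δ₂ (δ₁ (δ₂ v)) = 0 := by
        have := h12' (δ₂ v)
        rw [h2' v, map_zero, zero_add] at this
        exact this
      exact ⟨⟨h1' (δ₂ v), hk2⟩, Submodule.mem_sup_left ⟨δ₂ v, rfl⟩⟩
end

section
/- Let K be a field and V a K-vector space with linear endomorphisms δ₁, δ₂ : V → V satisfying δ₁² = 0, δ₂² = 0 and δ₁δ₂ + δ₂δ₁ = 0. Then ker δ₁ ∩ ker δ₂ ∩ (im δ₁ + im δ₂) = im(δ₁δ₂) if and only if both ker(δ₁δ₂) ⊆ ker δ₁ + im δ₂ and ker(δ₁δ₂) ⊆ ker δ₂ + im δ₁ (i.e. the δ₁δ₂-Lemma holds if and only if the natural maps from H_{δ₁} and from H_{δ₂} to the Aeppli cohomology induced by the identity are both surjective). -/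
open LinearMap Module

theorem lemma_iff_dolbeault_to_A_surjective
    {K V : Type*} [Field K] [AddCommGroup V] [Module K V]
    (δ₁ δ₂ : V →ₗ[K] V)
    (h1 : δ₁ ∘ₗ δ₁ = 0) (h2 : δ₂ ∘ₗ δ₂ = 0)
    (h12 : δ₁ ∘ₗ δ₂ + δ₂ ∘ₗ δ₁ = 0) :
    ker δ₁ ⊓ ker δ₂ ⊓ (range δ₁ ⊔ range δ₂) = range (δ₁ ∘ₗ δ₂) ↔
    (ker (δ₁ ∘ₗ δ₂) ≤ ker δ₁ ⊔ range δ₂ ∧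
      ker (δ₁ ∘ₗ δ₂) ≤ ker δ₂ ⊔ range δ₁) := by
  have h1' : ∀ x, δ₁ (δ₁ x) = 0 := fun x => congrFun (congrArg DFunLike.coe h1) x
  have h2' : ∀ x, δ₂ (δ₂ x) = 0 := fun x => congrFun (congrArg DFunLike.coe h2) x
  have h12' : ∀ x, δ₁ (δ₂ x) = - δ₂ (δ₁ x) := by
    intro x
    have := congrFun (congrArg DFunLike.coe h12) x
    simp only [LinearMap.add_apply, LinearMap.comp_apply, LinearMap.zero_apply] at this
    exact eq_neg_of_add_eq_zero_left this
  constructor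
  · rintro hL
    constructor
    · -- ker (δ₁δ₂) ≤ ker δ₁ ⊔ range δ₂
      intro x hx
      rw [LinearMap.mem_ker, LinearMap.comp_apply] at hx
      have hmem : δ₁ x ∈ ker δ₁ ⊓ ker δ₂ ⊓ (range δ₁ ⊔ range δ₂) := by
        refine ⟨⟨h1' x, ?_⟩, Submodule.mem_sup_left ⟨x, rfl⟩⟩
        show δ₂ (δ₁ x) = 0
        have h := h12' x
        rw [hx] at h
        exact neg_eq_zero.mp h.symm
      rw [hL] at hmem
      obtain ⟨y, hy⟩ := hmem
      rw [LinearMap.comp_apply] at hy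
      refine Submodule.mem_sup.2 ⟨x - δ₂ y, ?_, δ₂ y, ⟨y, rfl⟩, by abel⟩
      rw [LinearMap.mem_ker, map_sub, hy, sub_self]
    · intro x hx
      rw [LinearMap.mem_ker, LinearMap.comp_apply] at hx
      have hmem : δ₂ x ∈ ker δ₁ ⊓ ker δ₂ ⊓ (range δ₁ ⊔ range δ₂) :=
        ⟨⟨hx, h2' x⟩, Submodule.mem_sup_right ⟨x, rfl⟩⟩
      rw [hL] at hmem
      obtain ⟨y, hy⟩ := hmem
      rw [LinearMap.comp_apply] at hy
      refine Submodule.mem_sup.2 ⟨x + δ₁ y, ?_, -δ₁ y, neg_mem ⟨y, rfl⟩, by abel⟩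
      rw [LinearMap.mem_ker, map_add]
      have h : δ₂ (δ₁ y) = - δ₁ (δ₂ y) := by rw [h12' y, neg_neg]
      rw [h, hy]
      abel
  · rintro ⟨hA, hB⟩
    apply le_antisymm
    · rintro v ⟨⟨hv1, hv2⟩, hv3⟩
      have hv1' : δ₁ v = 0 := hv1
      have hv2' : δ₂ v = 0 := hv2
      obtain ⟨a, ⟨x, hx⟩, b, ⟨y, hy⟩, hab⟩ := Submodule.mem_sup.1 hv3
      subst hx; subst hy
      have hy0 : y ∈ ker (δ₁ ∘ₗ δ₂) := by
        rw [LinearMap.mem_ker, LinearMap.comp_apply]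
        have h : δ₁ (δ₁ x) + δ₁ (δ₂ y) = 0 := by rw [← map_add, hab, hv1']
        rwa [h1' x, zero_add] at h
      have hx0 : x ∈ ker (δ₁ ∘ₗ δ₂) := by
        rw [LinearMap.mem_ker, LinearMap.comp_apply]
        have h : δ₂ (δ₁ x) + δ₂ (δ₂ y) = 0 := by rw [← map_add, hab, hv2']
        rw [h2' y, add_zero] at h
        rw [h12' x, h, neg_zero]
      obtain ⟨k, hk, c1, ⟨c, hc⟩, hkc⟩ := Submodule.mem_sup.1 (hA hx0)
      subst hc
      have hk' : δ₁ k = 0 := hk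
      obtain ⟨K0, hK0, d1, ⟨d, hd⟩, hkd⟩ := Submodule.mem_sup.1 (hB hy0)
      subst hd
      have hK0' : δ₂ K0 = 0 := hK0
      refine ⟨c - d, ?_⟩
      rw [LinearMap.comp_apply, map_sub, map_sub]
      have e1 : δ₁ x = δ₁ (δ₂ c) := by rw [← hkc, map_add, hk', zero_add]
      have e2 : δ₂ y = - δ₁ (δ₂ d) := by
        rw [← hkd, map_add, hK0', zero_add, h12' d, neg_neg]
      rw [← hab, e1, e2]
      abel
    · rintro _ ⟨x, rfl⟩
      rw [LinearMap.comp_apply]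
      refine ⟨⟨h1' (δ₂ x), ?_⟩, Submodule.mem_sup_left ⟨δ₂ x, rfl⟩⟩
      show δ₂ (δ₁ (δ₂ x)) = 0
      have h := h12' (δ₂ x)
      rw [h2' x, map_zero] at h
      exact neg_eq_zero.mp h.symm
end

section
/- Let K be a field and V a K-vector space with linear endomorphisms δ₁, δ₂ : V → V satisfying δ₁² = 0, δ₂² = 0 and δ₁δ₂ + δ₂δ₁ = 0. If the δ₁δ₂-Lemma holds, i.e. ker δ₁ ∩ ker δ₂ ∩ (im δ₁ + im δ₂) = im(δ₁δ₂), then ker δ₁ ∩ ker δ₂ ∩ im(δ₁+δ₂) = im(δ₁δ₂) (i.e. the natural map from Bott-Chern cohomology to the cohomology of δ₁+δ₂ induced by the identity is injective). -/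
open LinearMap Module

theorem BC_to_total_injective_of_lemma
    {K V : Type*} [Field K] [AddCommGroup V] [Module K V]
    (δ₁ δ₂ : V →ₗ[K] V)
    (h1 : δ₁ ∘ₗ δ₁ = 0) (h2 : δ₂ ∘ₗ δ₂ = 0)
    (h12 : δ₁ ∘ₗ δ₂ + δ₂ ∘ₗ δ₁ = 0)
    (h : ker δ₁ ⊓ ker δ₂ ⊓ (range δ₁ ⊔ range δ₂) = range (δ₁ ∘ₗ δ₂)) :
    ker δ₁ ⊓ ker δ₂ ⊓ range (δ₁ + δ₂) = range (δ₁ ∘ₗ δ₂) := by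
  have hd1 : ∀ x, δ₁ (δ₁ x) = 0 := fun x => congrFun (congrArg DFunLike.coe h1) x
  have hd2 : ∀ x, δ₂ (δ₂ x) = 0 := fun x => congrFun (congrArg DFunLike.coe h2) x
  have hd12 : ∀ x, δ₁ (δ₂ x) + δ₂ (δ₁ x) = 0 :=
    fun x => congrFun (congrArg DFunLike.coe h12) x
  apply le_antisymm
  · refine le_trans (inf_le_inf_left _ ?_) h.le
    rintro v ⟨w, rfl⟩
    exact Submodule.add_mem_sup ⟨w, rfl⟩ ⟨w, rfl⟩
  · rintro v ⟨x, rfl⟩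
    refine ⟨⟨?_, ?_⟩, ⟨δ₂ x, ?_⟩⟩
    · simp [hd1]
    · simp only [coe_comp, Function.comp_apply, mem_ker]
      have := hd12 (δ₂ x)
      rw [hd2 x] at this
      simpa using this
    · simp [hd2]
end

section
/- Let K be a field of characteristic different from 2 and V a K-vector space with linear endomorphisms δ₁, δ₂ : V → V satisfying δ₁² = 0, δ₂² = 0 and δ₁δ₂ + δ₂δ₁ = 0. If ker δ₁ ∩ ker δ₂ ∩ im(δ₁+δ₂) = im(δ₁δ₂), then ker(δ₁δ₂) = ker(δ₁+δ₂) + im δ₁ + im δ₂ (i.e. the natural map from the cohomology of δ₁+δ₂ to the Aeppli cohomology induced by the identity is surjective). -/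
open LinearMap Module

theorem total_to_A_surjective
    {K V : Type*} [Field K] [AddCommGroup V] [Module K V]
    (hchar : (2 : K) ≠ 0)
    (δ₁ δ₂ : V →ₗ[K] V)
    (h1 : δ₁ ∘ₗ δ₁ = 0) (h2 : δ₂ ∘ₗ δ₂ = 0)
    (h12 : δ₁ ∘ₗ δ₂ + δ₂ ∘ₗ δ₁ = 0)
    (h : ker δ₁ ⊓ ker δ₂ ⊓ range (δ₁ + δ₂) = range (δ₁ ∘ₗ δ₂)) :
    ker (δ₁ ∘ₗ δ₂) = ker (δ₁ + δ₂) ⊔ range δ₁ ⊔ range δ₂ := by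
  have h1' : ∀ x, δ₁ (δ₁ x) = 0 := fun x => by simpa using LinearMap.ext_iff.mp h1 x
  have h2' : ∀ x, δ₂ (δ₂ x) = 0 := fun x => by simpa using LinearMap.ext_iff.mp h2 x
  have h12' : ∀ x, δ₂ (δ₁ x) = -δ₁ (δ₂ x) := fun x => by
    have hx := LinearMap.ext_iff.mp h12 x
    simp only [LinearMap.add_apply, LinearMap.coe_comp, Function.comp_apply,
      LinearMap.zero_apply] at hx
    exact eq_neg_of_add_eq_zero_right hx
  apply le_antisymm
  · intro v hv
    have hv' : δ₁ (δ₂ v) = 0 := hv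
    have hmem : (δ₁ + δ₂) v ∈ ker δ₁ ⊓ ker δ₂ ⊓ range (δ₁ + δ₂) := by
      refine ⟨⟨?_, ?_⟩, ⟨v, rfl⟩⟩
      · show δ₁ ((δ₁ + δ₂) v) = 0
        simp [h1' v, hv']
      · show δ₂ ((δ₁ + δ₂) v) = 0
        simp [h2' v, h12' v, hv']
    rw [h] at hmem
    obtain ⟨u, hu⟩ := hmem
    have hu' : δ₁ (δ₂ u) = δ₁ v + δ₂ v := by simpa using hu
    have hk : v - δ₂ u ∈ ker (δ₁ + δ₂) := by
      simp only [LinearMap.mem_ker, LinearMap.add_apply, map_sub]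
      rw [hu', h2' u]
      abel
    have : v = (v - δ₂ u) + δ₂ u := by abel
    rw [this]
    exact Submodule.add_mem _
      (Submodule.mem_sup_left (Submodule.mem_sup_left hk))
      (Submodule.mem_sup_right ⟨u, rfl⟩)
  · refine sup_le (sup_le ?_ ?_) ?_
    · intro v hv
      have hv' : δ₁ v + δ₂ v = 0 := hv
      have : δ₂ v = -δ₁ v := eq_neg_of_add_eq_zero_right hv'
      show δ₁ (δ₂ v) = 0
      rw [this, map_neg, h1' v, neg_zero]
    · rintro _ ⟨x, rfl⟩
      show δ₁ (δ₂ (δ₁ x)) = 0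
      rw [h12' x, map_neg, h1' (δ₂ x), neg_zero]
    · rintro _ ⟨x, rfl⟩
      show δ₁ (δ₂ (δ₂ x)) = 0
      rw [h2' x, map_zero]
end

section
/- Let V be a K-vector space with an internal ℤ²-grading V = ⊕_{(p,q)∈ℤ²} B^{p,q} and δ₁, δ₂ : V → V linear endomorphisms of bidegrees (1,0) and (0,1) respectively, satisfying δ₁² = 0, δ₂² = 0 and δ₁δ₂ + δ₂δ₁ = 0. If ker(δ₁δ₂) = ker(δ₁+δ₂) + im δ₁ + im δ₂, then ker(δ₁δ₂) = (ker δ₁ ∩ ker δ₂) + im δ₁ + im δ₂ (i.e. if the natural map from the cohomology of δ₁+δ₂ to the Aeppli cohomology is surjective, then so is the natural map from Bott-Chern to Aeppli cohomology). -/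
open LinearMap Module

section Aux

open DirectSum

variable {K V : Type*} [Field K] [AddCommGroup V] [Module K V]
variable (B : ℤ × ℤ → Submodule K V) [DirectSum.Decomposition B]

noncomputable def gproj (i : ℤ × ℤ) : V →ₗ[K] V :=
  (B i).subtype ∘ₗ (DFinsupp.lapply i : (⨁ j, B j) →ₗ[K] B i) ∘ₗ
    (decomposeLinearEquiv B : V →ₗ[K] ⨁ j, B j)

lemma gproj_apply (i : ℤ × ℤ) (v : V) : gproj B i v = (decompose B v i : V) := rfl

lemma gproj_mem (i : ℤ × ℤ) (v : V) : gproj B i v ∈ B i := by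
  rw [gproj_apply]; exact (decompose B v i).2

lemma gproj_same {i : ℤ × ℤ} {v : V} (hv : v ∈ B i) : gproj B i v = v := by
  rw [gproj_apply, decompose_of_mem_same B hv]

lemma gproj_ne {i j : ℤ × ℤ} {v : V} (hv : v ∈ B j) (hij : j ≠ i) : gproj B i v = 0 := by
  rw [gproj_apply, decompose_of_mem_ne B hv hij]

lemma mem_of_gproj_mem {S : Submodule K V} {v : V} (hS : ∀ i, gproj B i v ∈ S) : v ∈ S := by
  classical
  have hsum := DirectSum.sum_support_decompose B v
  rw [← hsum]
  exact Submodule.sum_mem _ fun i _ => by rw [← gproj_apply]; exact hS i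

lemma gproj_comm (f : V →ₗ[K] V) (σ : ℤ × ℤ → ℤ × ℤ) (hσ : Function.Injective σ)
    (hf : ∀ j, ∀ x ∈ B j, f x ∈ B (σ j)) (i : ℤ × ℤ) (v : V) :
    gproj B (σ i) (f v) = f (gproj B i v) := by
  classical
  conv_lhs => rw [← DirectSum.sum_support_decompose B v]
  rw [map_sum, map_sum, Finset.sum_eq_single i
      (fun j _ hj => gproj_ne B (hf j _ (SetLike.coe_mem _)) (fun e => hj (hσ e)))
      (fun hi => by
        rw [DFinsupp.notMem_support_iff.mp hi, ZeroMemClass.coe_zero, map_zero, map_zero]),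
    gproj_same B (hf i _ (SetLike.coe_mem _)), gproj_apply]

end Aux

theorem total_to_A_surjective_implies_BC_to_A_surjective
    {K V : Type*} [Field K] [AddCommGroup V] [Module K V]
    (B : ℤ × ℤ → Submodule K V) (hB : DirectSum.IsInternal B)
    (δ₁ δ₂ : V →ₗ[K] V)
    (hd1 : ∀ p q : ℤ, (B (p, q)).map δ₁ ≤ B (p + 1, q))
    (hd2 : ∀ p q : ℤ, (B (p, q)).map δ₂ ≤ B (p, q + 1))
    (h1 : δ₁ ∘ₗ δ₁ = 0) (h2 : δ₂ ∘ₗ δ₂ = 0)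
    (h12 : δ₁ ∘ₗ δ₂ + δ₂ ∘ₗ δ₁ = 0)
    (h : ker (δ₁ ∘ₗ δ₂) = ker (δ₁ + δ₂) ⊔ range δ₁ ⊔ range δ₂) :
    ker (δ₁ ∘ₗ δ₂) = (ker δ₁ ⊓ ker δ₂) ⊔ range δ₁ ⊔ range δ₂ := by
  classical
  letI := hB.chooseDecomposition
  -- pointwise versions of the algebraic relations
  have e1 : ∀ x : V, δ₁ (δ₁ x) = 0 := fun x => congrFun (congrArg DFunLike.coe h1) x
  have e2 : ∀ x : V, δ₂ (δ₂ x) = 0 := fun x => congrFun (congrArg DFunLike.coe h2) x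
  have e12 : ∀ x : V, δ₁ (δ₂ x) + δ₂ (δ₁ x) = 0 := fun x =>
    congrFun (congrArg DFunLike.coe h12) x
  -- commutation of projections with δ₁, δ₂
  have hc1 : ∀ (p q : ℤ) (v : V), gproj B (p + 1, q) (δ₁ v) = δ₁ (gproj B (p, q) v) := by
    intro p q v
    exact gproj_comm B δ₁ (fun j => (j.1 + 1, j.2))
      (fun a b e => by
        simp only [Prod.mk.injEq, Prod.ext_iff] at e ⊢
        omega)
      (fun j x hx => hd1 j.1 j.2 ⟨x, hx, rfl⟩) (p, q) v
  have hc2 : ∀ (p q : ℤ) (v : V), gproj B (p, q + 1) (δ₂ v) = δ₂ (gproj B (p, q) v) := by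
    intro p q v
    exact gproj_comm B δ₂ (fun j => (j.1, j.2 + 1))
      (fun a b e => by
        simp only [Prod.mk.injEq, Prod.ext_iff] at e ⊢
        omega)
      (fun j x hx => hd2 j.1 j.2 ⟨x, hx, rfl⟩) (p, q) v
  apply le_antisymm
  · -- hard inclusion
    intro v hv
    have hv' : δ₁ (δ₂ v) = 0 := hv
    apply mem_of_gproj_mem B
    rintro ⟨p, q⟩
    set v' := gproj B (p, q) v with hv'def
    -- v' is in the kernel of δ₁ ∘ δ₂
    have hker : v' ∈ ker (δ₁ ∘ₗ δ₂) := by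
      have : δ₂ v' = gproj B (p, q + 1) (δ₂ v) := (hc2 p q v).symm
      have : δ₁ (δ₂ v') = gproj B (p + 1, q + 1) (δ₁ (δ₂ v)) := by
        rw [this, hc1 p (q + 1) (δ₂ v)]
      simp only [mem_ker, comp_apply, this, hv', map_zero]
    rw [h] at hker
    obtain ⟨t, ht, y', hy, hty⟩ := Submodule.mem_sup.mp hker
    obtain ⟨w, hw, x', hx, hwx⟩ := Submodule.mem_sup.mp ht
    obtain ⟨x, rfl⟩ := hx
    obtain ⟨y, rfl⟩ := hy
    have hveq : v' = w + δ₁ x + δ₂ y := by rw [← hty, ← hwx]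
    have hwker : δ₁ w + δ₂ w = 0 := by simpa using hw
    -- components
    set a := gproj B (p, q) w
    set b := gproj B (p + 1, q - 1) w
    set c := gproj B (p - 1, q + 1) w
    set x₀ := gproj B (p - 1, q) x
    set x₁ := gproj B (p, q - 1) x
    set x₂ := gproj B (p - 2, q + 1) x
    set y₀ := gproj B (p, q - 1) y
    set y₁ := gproj B (p + 1, q - 2) y
    set y₂ := gproj B (p - 1, q) y
    have hvmem : v' ∈ B (p, q) := gproj_mem B (p, q) v
    -- projections of δ₁ x and δ₂ y at various spots
    have hpx0 : gproj B (p, q) (δ₁ x) = δ₁ x₀ := by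
      have := hc1 (p - 1) q x; rw [show p - 1 + 1 = p by ring] at this; exact this
    have hpy0 : gproj B (p, q) (δ₂ y) = δ₂ y₀ := by
      have := hc2 p (q - 1) y; rw [show q - 1 + 1 = q by ring] at this; exact this
    have hpx1 : gproj B (p + 1, q - 1) (δ₁ x) = δ₁ x₁ := hc1 p (q - 1) x
    have hpy1 : gproj B (p + 1, q - 1) (δ₂ y) = δ₂ y₁ := by
      have := hc2 (p + 1) (q - 2) y; rw [show q - 2 + 1 = q - 1 by ring] at this; exact this
    have hpx2 : gproj B (p - 1, q + 1) (δ₁ x) = δ₁ x₂ := by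
      have := hc1 (p - 2) (q + 1) x; rw [show p - 2 + 1 = p - 1 by ring] at this; exact this
    have hpy2 : gproj B (p - 1, q + 1) (δ₂ y) = δ₂ y₂ := by
      have := hc2 (p - 1) q y; exact this
    -- equation (E0): project v' = w + δ₁ x + δ₂ y at (p, q)
    have E0 : v' = a + δ₁ x₀ + δ₂ y₀ := by
      have := congrArg (gproj B (p, q)) (rfl : w + δ₁ x + δ₂ y = w + δ₁ x + δ₂ y)
      calc v' = gproj B (p, q) v' := (gproj_same B hvmem).symm
        _ = a + δ₁ x₀ + δ₂ y₀ := by rw [hveq, map_add, map_add, hpx0, hpy0]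
    -- equation (E1): project at (p+1, q-1); v' has zero component there
    have E1 : (0 : V) = b + δ₁ x₁ + δ₂ y₁ := by
      calc (0 : V) = gproj B (p + 1, q - 1) v' :=
            (gproj_ne B hvmem (by intro e; rw [Prod.mk.injEq] at e; omega)).symm
        _ = b + δ₁ x₁ + δ₂ y₁ := by rw [hveq, map_add, map_add, hpx1, hpy1]
    have E2 : (0 : V) = c + δ₁ x₂ + δ₂ y₂ := by
      calc (0 : V) = gproj B (p - 1, q + 1) v' :=
            (gproj_ne B hvmem (by intro e; rw [Prod.mk.injEq] at e; omega)).symm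
        _ = c + δ₁ x₂ + δ₂ y₂ := by rw [hveq, map_add, map_add, hpx2, hpy2]
    -- kernel relations of w, projected
    have K1 : δ₁ a + δ₂ b = 0 := by
      have h0 : gproj B (p + 1, q) (δ₁ w + δ₂ w) = 0 := by rw [hwker, map_zero]
      have hb : gproj B (p + 1, q) (δ₂ w) = δ₂ b := by
        have := hc2 (p + 1) (q - 1) w; rw [show q - 1 + 1 = q by ring] at this; exact this
      rwa [map_add, hc1 p q w, hb] at h0
    have K2 : δ₂ a + δ₁ c = 0 := by
      have h0 : gproj B (p, q + 1) (δ₁ w + δ₂ w) = 0 := by rw [hwker, map_zero]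
      have hcw : gproj B (p, q + 1) (δ₁ w) = δ₁ c := by
        have := hc1 (p - 1) (q + 1) w; rw [show p - 1 + 1 = p by ring] at this; exact this
      rw [map_add, hcw, hc2 p q w] at h0
      linear_combination (norm := module) h0
    -- the Bott-Chern representative
    set u := a + δ₂ x₁ + δ₁ y₂ with hu
    have hu1 : δ₁ u = 0 := by
      have hE1 := congrArg δ₂ E1
      simp only [map_zero, map_add, e2, add_zero] at hE1
      have hb' : δ₂ b = -δ₂ (δ₁ x₁) := eq_neg_of_add_eq_zero_left hE1.symm
      have ha : δ₁ a = δ₂ (δ₁ x₁) := by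
        rw [eq_neg_of_add_eq_zero_left K1, hb', neg_neg]
      have h12x : δ₁ (δ₂ x₁) = -δ₂ (δ₁ x₁) := eq_neg_of_add_eq_zero_left (e12 x₁)
      simp only [hu, map_add, ha, h12x, e1 y₂]
      abel
    have hu2 : δ₂ u = 0 := by
      have hE2 := congrArg δ₁ E2
      simp only [map_zero, map_add, e1, add_zero] at hE2
      -- hE2 : 0 = δ₁ c + 0 + δ₁ (δ₂ y₂)  (after simp)
      have hc' : δ₁ c = -δ₁ (δ₂ y₂) := by
        have h' : δ₁ c + δ₁ (δ₂ y₂) = 0 := by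
          have := hE2.symm
          linear_combination (norm := abel) this
        exact eq_neg_of_add_eq_zero_left h'
      have ha : δ₂ a = δ₁ (δ₂ y₂) := by
        rw [eq_neg_of_add_eq_zero_left K2, hc', neg_neg]
      have h12y : δ₂ (δ₁ y₂) = -δ₁ (δ₂ y₂) := eq_neg_of_add_eq_zero_right (e12 y₂)
      simp only [hu, map_add, ha, h12y, e2 x₁]
      abel
    -- conclude
    have hdecomp : v' = u + δ₁ (x₀ - y₂) + δ₂ (y₀ - x₁) := by
      simp only [hu, map_sub]
      linear_combination (norm := module) E0
    rw [hdecomp]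
    refine Submodule.add_mem _ (Submodule.mem_sup_left (Submodule.add_mem _ ?_ ?_)) ?_
    · exact Submodule.mem_sup_left ⟨hu1, hu2⟩
    · exact Submodule.mem_sup_right ⟨x₀ - y₂, rfl⟩
    · exact Submodule.mem_sup_right ⟨y₀ - x₁, rfl⟩
  · -- easy inclusion
    refine sup_le (sup_le ?_ ?_) ?_
    · rintro z ⟨hz1, hz2⟩
      simp only [mem_ker, comp_apply] at *
      rw [hz2, map_zero]
    · rintro z ⟨z', rfl⟩
      simp only [mem_ker, comp_apply]
      have := e12 z'
      have h' : δ₂ (δ₁ z') = -δ₁ (δ₂ z') := by linear_combination (norm := module) this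
      rw [show δ₂ (δ₁ z') = -δ₁ (δ₂ z') from h']
      rw [map_neg]
      have : δ₁ (δ₁ (δ₂ z')) = 0 := e1 _
      rw [this, neg_zero]
    · rintro z ⟨z', rfl⟩
      simp only [mem_ker, comp_apply, e2 z', map_zero]
end
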